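/- arXiv:0901.2591 — 11 statements merged into one kernel-verified Lean document; each statement's English description precedes it below -/
import Mathlib

section
/- Suppose k is algebraically closed of characteristic 0. Let F be a polynomial function on gl_n(k) × V* × V such that F(gXg⁻¹, λg⁻¹, gv) = F(X,λ,v) for every invertible n×n matrix g, and F(X + wλ − vν, λ, v) = F(X,λ,v) for every column vector w ∈ V and row vector ν ∈ V* (here wλ and vν denote the rank-one n×n matrices obtained as column-times-row products). Then F belongs to the k-subalgebra of polynomial functions generated by f_0, f_1, …, f_{n−1}. -/
open Matrix

/-- `Q X j` is defined by `det (t•I - X) = ∑ j, (-1)^j * Q j X * t^(n-j)`. -/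
noncomputable def QQ {R : Type*} [CommRing R] {n : ℕ} (X : Matrix (Fin n) (Fin n) R)
    (j : ℕ) : R :=
  (-1) ^ j * X.charpoly.coeff (n - j)

/-- `B X k = X^k - Q₁(X)•X^(k-1) + Q₂(X)•X^(k-2) - ⋯ + (-1)^k Q_k(X)•I`. -/
noncomputable def BB {R : Type*} [CommRing R] {n : ℕ} (X : Matrix (Fin n) (Fin n) R)
    (k : ℕ) : Matrix (Fin n) (Fin n) R :=
  ∑ i ∈ Finset.range (k + 1), ((-1) ^ i * QQ X i) • X ^ (k - i)

/-- `fdef X λ v k = λ ⬝ B_k(X) ⬝ v`. -/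
noncomputable def fdef {R : Type*} [CommRing R] {n : ℕ} (X : Matrix (Fin n) (Fin n) R)
    (l v : Fin n → R) (k : ℕ) : R :=
  l ⬝ᵥ (BB X k).mulVec v

/-- Evaluation of a polynomial in the `n² + 2n` variables (entries of `X`, `λ`, `v`)
at a point `(X, λ, v)` of `gl_n(K) × V* × V`. -/
noncomputable def evP {K : Type*} [Field K] {n : ℕ}
    (X : Matrix (Fin n) (Fin n) K) (l v : Fin n → K)
    (F : MvPolynomial ((Fin n × Fin n) ⊕ (Fin n) ⊕ (Fin n)) K) : K :=
  MvPolynomial.eval (Sum.elim (fun p => X p.1 p.2) (Sum.elim l v)) F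

/-!
Write `c_i` for the coefficients of the characteristic polynomial of `X`, so that
`B_{k+1}(X) = X B_k(X) + c_{n-k-1}` and, by Cayley–Hamilton, `B_n(X) = 0`. Let `P` be the
matrix with columns `B_0(X) v, …, B_{n-1}(X) v`. When `P` is invertible, choose `ν` with
`ν P = (-c_{n-1}, …, -c_0)`; the recursion says exactly that `(X - v ν) P = P J` for the
nilpotent shift `J : e_j ↦ e_{j+1}`, while `P e_0 = v` and `λ P = (f_0, …, f_{n-1})(X, λ, v)`.
So a translation followed by a conjugation moves `(X, λ, v)` to `(J, (f_k(X, λ, v))_k, e_0)`,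
and an invariant `F` agrees with `G(f_0, …, f_{n-1})`, where `G(a) = F(J, a, e_0)`, off the
hypersurface `det P = 0`. At `(J, e_0)` the matrix `P` is unitriangular, so `det P` is a nonzero
polynomial and the identity `F = G(f_0, …, f_{n-1})` holds everywhere over an infinite field.
-/

section CharpolyCoeffs

variable {R : Type*} [CommRing R] {n : ℕ}

theorem neg_one_pow_mul_QQ (X : Matrix (Fin n) (Fin n) R) (j : ℕ) :
    (-1) ^ j * QQ X j = X.charpoly.coeff (n - j) := by
  rw [QQ, ← mul_assoc, ← pow_add, Even.neg_one_pow ⟨j, rfl⟩, one_mul]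

theorem BB_eq_sum (X : Matrix (Fin n) (Fin n) R) (k : ℕ) :
    BB X k = ∑ i ∈ Finset.range (k + 1), X.charpoly.coeff (n - i) • X ^ (k - i) := by
  simp only [BB, neg_one_pow_mul_QQ]

theorem BB_succ (X : Matrix (Fin n) (Fin n) R) (k : ℕ) :
    BB X (k + 1) = X * BB X k + X.charpoly.coeff (n - (k + 1)) • 1 := by
  rw [BB_eq_sum, BB_eq_sum, Finset.sum_range_succ, Nat.sub_self, pow_zero, Finset.mul_sum]
  congr 1
  refine Finset.sum_congr rfl fun i hi => ?_
  rw [Matrix.mul_smul, ← pow_succ', Nat.sub_add_comm (Finset.mem_range_succ_iff.1 hi)]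

theorem BB_map {S : Type*} [CommRing S] (f : R →+* S) (X : Matrix (Fin n) (Fin n) R) (k : ℕ) :
    BB (X.map f) k = (BB X k).map f := by
  rw [BB_eq_sum, BB_eq_sum, ← f.mapMatrix_apply, ← f.mapMatrix_apply, map_sum]
  refine Finset.sum_congr rfl fun i _ => ?_
  rw [f.mapMatrix_apply, Matrix.charpoly_map, Polynomial.coeff_map, f.mapMatrix_apply,
    Matrix.map_smul' _ _ _ (map_mul f), ← f.mapMatrix_apply, ← f.mapMatrix_apply, map_pow]

theorem map_fdef {S : Type*} [CommRing S] (f : R →+* S) (X : Matrix (Fin n) (Fin n) R)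
    (l v : Fin n → R) (k : ℕ) : f (fdef X l v k) = fdef (X.map f) (f ∘ l) (f ∘ v) k := by
  rw [fdef, fdef, RingHom.map_dotProduct, BB_map]
  congr 1
  exact funext (f.map_mulVec _ _)

variable [Nontrivial R]

theorem charpoly_coeff_dim (X : Matrix (Fin n) (Fin n) R) : X.charpoly.coeff n = 1 := by
  simpa using X.charpoly_monic.coeff_natDegree

theorem BB_zero (X : Matrix (Fin n) (Fin n) R) : BB X 0 = 1 := by
  simp [BB_eq_sum, charpoly_coeff_dim]

theorem BB_dim_eq_zero (X : Matrix (Fin n) (Fin n) R) : BB X n = 0 := by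
  have h := Finset.sum_range_reflect (fun j => X.charpoly.coeff j • X ^ j) (n + 1)
  rw [add_tsub_cancel_right] at h
  rw [BB_eq_sum, h, ← X.aeval_self_charpoly, Polynomial.aeval_eq_sum_range,
    Matrix.charpoly_natDegree_eq_dim, Fintype.card_fin]

end CharpolyCoeffs

noncomputable section CyclicFrame

variable {R : Type*} [CommRing R] {n : ℕ}

def cyclicFrame (X : Matrix (Fin n) (Fin n) R) (v : Fin n → R) : Matrix (Fin n) (Fin n) R :=
  of fun i k => (BB X k *ᵥ v) i

variable (R n) in
def lowerShift : Matrix (Fin n) (Fin n) R :=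
  of fun i j => if (i : ℕ) = j + 1 then 1 else 0

theorem vecMul_cyclicFrame (X : Matrix (Fin n) (Fin n) R) (l v : Fin n → R) :
    l ᵥ* cyclicFrame X v = fun k : Fin n => fdef X l v k :=
  rfl

theorem cyclicFrame_map {S : Type*} [CommRing S] (f : R →+* S) (X : Matrix (Fin n) (Fin n) R)
    (v : Fin n → R) : cyclicFrame (X.map f) (f ∘ v) = (cyclicFrame X v).map f := by
  ext i k
  simp only [cyclicFrame, of_apply, map_apply, BB_map, f.map_mulVec]

theorem lowerShift_mulVec_apply (w : Fin n → R) {i j : Fin n} (h : (i : ℕ) = j + 1) :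
    (lowerShift R n *ᵥ w) i = w j := by
  rw [mulVec, dotProduct, Finset.sum_eq_single j]
  · simp [lowerShift, h]
  · intro j' _ hj'
    have : (i : ℕ) ≠ j' + 1 := by rw [h]; simpa [Fin.val_inj] using hj'.symm
    simp [lowerShift, this]
  · simp

theorem mul_lowerShift_apply (M : Matrix (Fin n) (Fin n) R) (i k : Fin n) :
    (M * lowerShift R n) i k = if h : (k : ℕ) + 1 < n then M i ⟨k + 1, h⟩ else 0 := by
  rw [mul_apply]
  split_ifs with h
  · rw [Finset.sum_eq_single ⟨k + 1, h⟩]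
    · simp [lowerShift]
    · intro j _ hj
      simp [lowerShift, Fin.ext_iff] at hj ⊢
      omega
    · simp
  · refine Finset.sum_eq_zero fun j _ => ?_
    simp only [lowerShift, of_apply, mul_ite, mul_one, mul_zero]
    exact if_neg (by omega)

variable [Nontrivial R]

theorem cyclicFrame_mulVec_single_zero [NeZero n] (X : Matrix (Fin n) (Fin n) R)
    (v : Fin n → R) : cyclicFrame X v *ᵥ Pi.single 0 1 = v := by
  ext i
  simp [cyclicFrame, BB_zero]

theorem cyclicFrame_mul_lowerShift (X : Matrix (Fin n) (Fin n) R) (v : Fin n → R) :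
    cyclicFrame X v * lowerShift R n = of fun i (k : Fin n) => (BB X (k + 1) *ᵥ v) i := by
  ext i k
  rw [mul_lowerShift_apply]
  split_ifs with h
  · rfl
  · rw [of_apply, show (k : ℕ) + 1 = n by omega, BB_dim_eq_zero, zero_mulVec, Pi.zero_apply]

theorem sub_vecMulVec_mul_cyclicFrame (X : Matrix (Fin n) (Fin n) R) {v ν : Fin n → R}
    (hν : ν ᵥ* cyclicFrame X v = fun k : Fin n => -X.charpoly.coeff (n - (k + 1))) :
    (X - vecMulVec v ν) * cyclicFrame X v = cyclicFrame X v * lowerShift R n := by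
  rw [cyclicFrame_mul_lowerShift, Matrix.sub_mul, vecMulVec_mul, hν]
  ext i k
  simp only [Matrix.sub_apply, mul_apply, vecMulVec_apply, cyclicFrame, of_apply, BB_succ,
    add_mulVec, smul_mulVec, one_mulVec, ← mulVec_mulVec, Pi.add_apply, Pi.smul_apply,
    smul_eq_mul]
  rw [mulVec, dotProduct]
  ring

theorem BB_lowerShift_mulVec_single_zero_apply_of_le [NeZero n] (k : ℕ) (i : Fin n)
    (hki : k ≤ i) :
    (BB (lowerShift R n) k *ᵥ Pi.single 0 1) i = if (i : ℕ) = k then 1 else 0 := by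
  induction k generalizing i with
  | zero =>
    rw [BB_zero, one_mulVec]
    simp only [Pi.single_apply, Fin.ext_iff, Fin.val_zero]
  | succ k ih =>
    obtain ⟨j, hj⟩ : ∃ j : Fin n, (i : ℕ) = j + 1 :=
      ⟨⟨i - 1, by omega⟩, by simp only; omega⟩
    have hi0 : i ≠ 0 := fun h => by simp [h] at hj
    rw [BB_succ, add_mulVec, ← mulVec_mulVec, Pi.add_apply, lowerShift_mulVec_apply _ hj,
      ih j (by omega), smul_mulVec, one_mulVec, Pi.smul_apply, Pi.single_eq_of_ne hi0, smul_zero,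
      add_zero, hj]
    simp only [Nat.add_right_cancel_iff]

theorem det_cyclicFrame_lowerShift [NeZero n] :
    (cyclicFrame (lowerShift R n) (Pi.single 0 1)).det = 1 := by
  rw [det_of_isUpperTriangular]
  · refine Finset.prod_eq_one fun i _ => ?_
    rw [cyclicFrame, of_apply, BB_lowerShift_mulVec_single_zero_apply_of_le _ _ le_rfl,
      if_pos rfl]
  · intro i k (hki : k < i)
    rw [cyclicFrame, of_apply, BB_lowerShift_mulVec_single_zero_apply_of_le _ _ hki.le,
      if_neg (Fin.val_ne_of_ne hki.ne')]

end CyclicFrame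

section Reduction

variable {K : Type*} [Field K] {n : ℕ} [NeZero n]

theorem evP_eq_evP_lowerShift {F : MvPolynomial ((Fin n × Fin n) ⊕ (Fin n) ⊕ (Fin n)) K}
    (hGL : ∀ g : GL (Fin n) K, ∀ (X : Matrix (Fin n) (Fin n) K) (l v : Fin n → K),
      evP ((g : Matrix (Fin n) (Fin n) K) * X * ((g⁻¹ : GL (Fin n) K) : Matrix (Fin n) (Fin n) K))
        (vecMul l ((g⁻¹ : GL (Fin n) K) : Matrix (Fin n) (Fin n) K))
        (mulVec (g : Matrix (Fin n) (Fin n) K) v) F = evP X l v F)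
    (htrans : ∀ (X : Matrix (Fin n) (Fin n) K) (l v w nu : Fin n → K),
      evP (X + vecMulVec w l - vecMulVec v nu) l v F = evP X l v F)
    {X : Matrix (Fin n) (Fin n) K} (l : Fin n → K) {v : Fin n → K}
    (hX : IsUnit (cyclicFrame X v)) :
    evP X l v F = evP (lowerShift K n) (fun k : Fin n => fdef X l v k) (Pi.single 0 1) F := by
  obtain ⟨P, hP⟩ := hX
  set c : Fin n → K := fun k => -X.charpoly.coeff (n - (k + 1))
  set ν := c ᵥ* (↑P⁻¹ : Matrix (Fin n) (Fin n) K)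
  have hν : ν ᵥ* cyclicFrame X v = c := by
    rw [← hP, vecMul_vecMul, P.inv_mul, vecMul_one]
  have hconj :
      (↑P⁻¹ : Matrix (Fin n) (Fin n) K) * (X - vecMulVec v ν) * (P : Matrix (Fin n) (Fin n) K)
        = lowerShift K n := by
    rw [mul_assoc, hP, sub_vecMulVec_mul_cyclicFrame X hν, ← hP, ← mul_assoc, P.inv_mul,
      one_mul]
  have hv : (↑P⁻¹ : Matrix (Fin n) (Fin n) K) *ᵥ v = Pi.single 0 1 := by
    rw [← cyclicFrame_mulVec_single_zero X v, ← hP, mulVec_mulVec, P.inv_mul, one_mulVec]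
  calc evP X l v F = evP (X + vecMulVec 0 l - vecMulVec v ν) l v F := (htrans X l v 0 ν).symm
    _ = evP (↑P⁻¹ * (X - vecMulVec v ν) * ↑P⁻¹⁻¹) (l ᵥ* ↑P⁻¹⁻¹) (↑P⁻¹ *ᵥ v) F := by
      rw [zero_vecMulVec, add_zero, hGL]
    _ = _ := by rw [inv_inv, hconj, hv, hP, vecMul_cyclicFrame]

end Reduction

theorem MvPolynomial.eval_aeval {σ τ R : Type*} [CommSemiring R] (x : τ → R)
    (g : σ → MvPolynomial τ R) (p : MvPolynomial σ R) :
    eval x (aeval g p) = eval (fun i => eval x (g i)) p :=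
  comp_aeval_apply (f := g) (aeval x) p

theorem MvPolynomial.eq_of_eval_eq_of_eval_ne_zero {σ R : Type*} [CommRing R] [IsDomain R]
    [Infinite R] {p q d : MvPolynomial σ R} (hd : d ≠ 0)
    (h : ∀ x, eval x d ≠ 0 → eval x p = eval x q) : p = q :=
  mul_left_cancel₀ hd <| MvPolynomial.funext fun x => by
    by_cases hx : eval x d = 0
    · simp only [map_mul, hx, zero_mul]
    · simp only [map_mul, h x hx]

noncomputable section GenericPoint

open MvPolynomial

variable {K : Type*} {n : ℕ}

abbrev Coords (n : ℕ) : Type := (Fin n × Fin n) ⊕ Fin n ⊕ Fin n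

def coordsOf (X : Matrix (Fin n) (Fin n) K) (l v : Fin n → K) : Coords n → K :=
  Sum.elim (fun p => X p.1 p.2) (Sum.elim l v)

theorem coordsOf_surjective :
    Function.Surjective fun t : Matrix (Fin n) (Fin n) K × (Fin n → K) × (Fin n → K) =>
      coordsOf t.1 t.2.1 t.2.2 := by
  intro x
  refine ⟨(of fun a b => x (.inl (a, b)), fun i => x (.inr (.inl i)), fun i => x (.inr (.inr i))),
    ?_⟩
  funext s
  rcases s with ⟨a, b⟩ | i | i <;> rfl

variable [CommRing K]

variable (K n) in
def genericMatrix : Matrix (Fin n) (Fin n) (MvPolynomial (Coords n) K) :=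
  of fun a b => MvPolynomial.X (.inl (a, b))

variable (K n) in
def genericCovector : Fin n → MvPolynomial (Coords n) K :=
  fun i => MvPolynomial.X (.inr (.inl i))

variable (K n) in
def genericVector : Fin n → MvPolynomial (Coords n) K :=
  fun i => MvPolynomial.X (.inr (.inr i))

theorem genericMatrix_map_eval (X : Matrix (Fin n) (Fin n) K) (l v : Fin n → K) :
    (genericMatrix K n).map (eval (coordsOf X l v)) = X := by
  ext a b
  simp [genericMatrix, coordsOf]

theorem eval_comp_genericCovector (X : Matrix (Fin n) (Fin n) K) (l v : Fin n → K) :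
    eval (coordsOf X l v) ∘ genericCovector K n = l := by
  funext i
  simp [genericCovector, coordsOf]

theorem eval_comp_genericVector (X : Matrix (Fin n) (Fin n) K) (l v : Fin n → K) :
    eval (coordsOf X l v) ∘ genericVector K n = v := by
  funext i
  simp [genericVector, coordsOf]

theorem eval_fdef_generic (X : Matrix (Fin n) (Fin n) K) (l v : Fin n → K) (k : ℕ) :
    eval (coordsOf X l v) (fdef (genericMatrix K n) (genericCovector K n) (genericVector K n) k) =
      fdef X l v k := by
  rw [map_fdef, genericMatrix_map_eval, eval_comp_genericCovector, eval_comp_genericVector]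

theorem eval_det_cyclicFrame_generic (X : Matrix (Fin n) (Fin n) K) (l v : Fin n → K) :
    eval (coordsOf X l v) (cyclicFrame (genericMatrix K n) (genericVector K n)).det =
      (cyclicFrame X v).det := by
  rw [RingHom.map_det, RingHom.mapMatrix_apply, ← cyclicFrame_map, genericMatrix_map_eval,
    eval_comp_genericVector]

theorem det_cyclicFrame_generic_ne_zero [Nontrivial K] [NeZero n] :
    (cyclicFrame (genericMatrix K n) (genericVector K n)).det ≠ 0 := fun h => by
  have := eval_det_cyclicFrame_generic (lowerShift K n) 0 (Pi.single 0 1 : Fin n → K)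
  rw [h, map_zero, det_cyclicFrame_lowerShift] at this
  exact zero_ne_one this

def restrictLowerShift [NeZero n] (F : MvPolynomial (Coords n) K) : MvPolynomial (Fin n) K :=
  aeval (coordsOf (of fun a b => C (lowerShift K n a b)) X
    (fun i => C ((Pi.single 0 1 : Fin n → K) i))) F

end GenericPoint

open MvPolynomial in
theorem eval_restrictLowerShift {K : Type*} [Field K] {n : ℕ} [NeZero n]
    (F : MvPolynomial (Coords n) K) (a : Fin n → K) :
    eval a (restrictLowerShift F) = evP (lowerShift K n) a (Pi.single 0 1) F := by
  rw [restrictLowerShift, eval_aeval, evP]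
  congr 2 with s
  rcases s with ⟨a, b⟩ | i | i <;> simp [coordsOf]

theorem stmt_1_general {K : Type*} [Field K] [IsAlgClosed K] {n : ℕ} (hn : 1 ≤ n)
    (F : MvPolynomial ((Fin n × Fin n) ⊕ (Fin n) ⊕ (Fin n)) K)
    (hGL : ∀ g : GL (Fin n) K, ∀ (X : Matrix (Fin n) (Fin n) K) (l v : Fin n → K),
      evP ((g : Matrix (Fin n) (Fin n) K) * X * ((g⁻¹ : GL (Fin n) K) : Matrix (Fin n) (Fin n) K))
        (vecMul l ((g⁻¹ : GL (Fin n) K) : Matrix (Fin n) (Fin n) K))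
        (mulVec (g : Matrix (Fin n) (Fin n) K) v) F = evP X l v F)
    (htrans : ∀ (X : Matrix (Fin n) (Fin n) K) (l v w nu : Fin n → K),
      evP (X + vecMulVec w l - vecMulVec v nu) l v F = evP X l v F) :
    F ∈ Algebra.adjoin K (Set.range fun j : Fin n =>
      fdef (R := MvPolynomial ((Fin n × Fin n) ⊕ (Fin n) ⊕ (Fin n)) K)
        (Matrix.of fun a b => MvPolynomial.X (Sum.inl (a, b)))
        (fun i => MvPolynomial.X (Sum.inr (Sum.inl i)))
        (fun i => MvPolynomial.X (Sum.inr (Sum.inr i)))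
        (j : ℕ)) := by
  have : NeZero n := ⟨by omega⟩
  change F ∈ Algebra.adjoin K (Set.range fun j : Fin n =>
    fdef (genericMatrix K n) (genericCovector K n) (genericVector K n) j)
  rw [← MvPolynomial.aeval_range]
  refine ⟨restrictLowerShift F, MvPolynomial.eq_of_eval_eq_of_eval_ne_zero
    det_cyclicFrame_generic_ne_zero fun x hx => ?_⟩
  obtain ⟨⟨X, l, v⟩, rfl⟩ := coordsOf_surjective x
  rw [eval_det_cyclicFrame_generic, ← isUnit_iff_ne_zero, ← isUnit_iff_isUnit_det] at hx
  simp only [AlgHom.toRingHom_eq_coe, RingHom.coe_coe, MvPolynomial.eval_aeval,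
    eval_fdef_generic, eval_restrictLowerShift]
  exact (evP_eq_evP_lowerShift hGL htrans l hx).symm

/-- if a polynomial function `F` on `gl_n(k) × V* × V` is invariant under
the coadjoint action of `GL_n ⋉ (V ⊕ V*)`, then `F` lies in the subalgebra generated by
`f_0, …, f_{n-1}` (char 0, algebraically closed). -/
theorem stmt_1 {K : Type*} [Field K] [IsAlgClosed K] [CharZero K] {n : ℕ} (hn : 1 ≤ n)
    (F : MvPolynomial ((Fin n × Fin n) ⊕ (Fin n) ⊕ (Fin n)) K)
    (hGL : ∀ g : GL (Fin n) K, ∀ (X : Matrix (Fin n) (Fin n) K) (l v : Fin n → K),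
      evP ((g : Matrix (Fin n) (Fin n) K) * X * ((g⁻¹ : GL (Fin n) K) : Matrix (Fin n) (Fin n) K))
        (vecMul l ((g⁻¹ : GL (Fin n) K) : Matrix (Fin n) (Fin n) K))
        (mulVec (g : Matrix (Fin n) (Fin n) K) v) F = evP X l v F)
    (htrans : ∀ (X : Matrix (Fin n) (Fin n) K) (l v w nu : Fin n → K),
      evP (X + vecMulVec w l - vecMulVec v nu) l v F = evP X l v F) :
    F ∈ Algebra.adjoin K (Set.range fun j : Fin n =>
      fdef (R := MvPolynomial ((Fin n × Fin n) ⊕ (Fin n) ⊕ (Fin n)) K)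
        (Matrix.of fun a b => MvPolynomial.X (Sum.inl (a, b)))
        (fun i => MvPolynomial.X (Sum.inr (Sum.inl i)))
        (fun i => MvPolynomial.X (Sum.inr (Sum.inr i)))
        (j : ℕ)) :=
  stmt_1_general hn F hGL htrans
end

section
/- Let Y be the n×n matrix with ones on the subdiagonal (Y_{i+1,i} = 1 for 1 ≤ i ≤ n−1) and zeros elsewhere, and let x_n* = (0,…,0,1) be the n-th coordinate row vector. Then for every 0 ≤ k ≤ n−1 one has B_k(Y) = Y^k, and f_k(Y, x_n*, v) = v_{n−k} for every column vector v ∈ k^n. In particular the restrictions of f_0,…,f_{n−1} to the affine slice {(Y, x_n*, v) : v ∈ k^n} are exactly the coordinate functions v_n, v_{n−1}, …, v_1. -/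
open Matrix

/-!
For a nilpotent `X` over a reduced ring the characteristic polynomial is `t ^ n`, so
`Q_j(X) = 0` for `1 ≤ j ≤ n` and `B_k(X) = X ^ k`. The subdiagonal shift `Y` is nilpotent, and
`Y ^ k` is the shift by `k`, so `x_n* ⬝ Y ^ k ⬝ v` picks out the coordinate `k` places above
the last one.
-/

open Polynomial

namespace Matrix

variable {R : Type*} {n : ℕ}

theorem charpoly_eq_X_pow_of_isNilpotent [CommRing R] [IsReduced R]
    {X : Matrix (Fin n) (Fin n) R} (hX : IsNilpotent X) : X.charpoly = Polynomial.X ^ n := by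
  have h := isNilpotent_charpoly_sub_pow_of_isNilpotent hX
  rw [Fintype.card_fin, Polynomial.isNilpotent_iff] at h
  exact sub_eq_zero.mp (Polynomial.ext fun i => (h i).eq_zero)

theorem QQ_eq_zero_of_charpoly_eq_X_pow [CommRing R] {X : Matrix (Fin n) (Fin n) R}
    (hX : X.charpoly = Polynomial.X ^ n) {j : ℕ} (hj₀ : j ≠ 0) (hjn : j ≤ n) :
    QQ X j = 0 := by
  rw [QQ, hX, coeff_X_pow, if_neg (by omega), mul_zero]

theorem BB_eq_pow_of_charpoly_eq_X_pow [CommRing R] {X : Matrix (Fin n) (Fin n) R}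
    (hX : X.charpoly = Polynomial.X ^ n) {k : ℕ} (hk : k ≤ n) : BB X k = X ^ k := by
  rw [BB, Finset.sum_eq_single 0]
  · simp [QQ, hX]
  · intro j hj hj₀
    rw [QQ_eq_zero_of_charpoly_eq_X_pow hX hj₀ (by grind), mul_zero, zero_smul]
  · simp

theorem BB_eq_pow_of_isNilpotent [CommRing R] [IsReduced R] {X : Matrix (Fin n) (Fin n) R}
    (hX : IsNilpotent X) {k : ℕ} (hk : k ≤ n) : BB X k = X ^ k :=
  BB_eq_pow_of_charpoly_eq_X_pow (charpoly_eq_X_pow_of_isNilpotent hX) hk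

variable (R n) in
def subdiagonalShift [Zero R] [One R] : Matrix (Fin n) (Fin n) R :=
  of fun i j => if (i : ℕ) = (j : ℕ) + 1 then 1 else 0

theorem subdiagonalShift_pow_apply [Semiring R] (k : ℕ) (i j : Fin n) :
    (subdiagonalShift R n ^ k) i j = if (i : ℕ) = (j : ℕ) + k then 1 else 0 := by
  induction k generalizing i j with
  | zero => simp [one_apply, Fin.ext_iff]
  | succ k ih =>
    rw [pow_succ, mul_apply]
    simp only [ih]
    simp only [subdiagonalShift, of_apply, mul_ite, mul_one, mul_zero]
    -- only `b = j + 1` contributes, and that index exists iff `j + 1 < n`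
    rw [Fin.sum_univ_eq_sum_range (fun b => if (b : ℕ) = (j : ℕ) + 1 then
      (if (i : ℕ) = b + k then (1 : R) else 0) else 0), Finset.sum_ite_eq']
    grind

theorem isNilpotent_subdiagonalShift [Semiring R] : IsNilpotent (subdiagonalShift R n) :=
  ⟨n, by ext i j; simp [subdiagonalShift_pow_apply]; omega⟩

theorem subdiagonalShift_pow_mulVec_apply [Semiring R] (k : ℕ) (v : Fin n → R) (i : Fin n)
    (hki : k ≤ i) : (subdiagonalShift R n ^ k *ᵥ v) i = v ⟨i - k, by omega⟩ := by
  rw [mulVec, dotProduct, Finset.sum_eq_single ⟨i - k, by omega⟩]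
  · simp [subdiagonalShift_pow_apply]; omega
  · intro b _ hb
    rw [subdiagonalShift_pow_apply, if_neg (by grind), zero_mul]
  · simp

end Matrix

/-- for the subdiagonal matrix `Y` (`Y_{i+1,i} = 1`, all other entries `0`)
and the last coordinate row vector `x_n* = (0,…,0,1)`, one has `B_k(Y) = Y^k` for
`0 ≤ k ≤ n-1`, and `f_k(Y, x_n*, v) = v_{n-k}` (1-indexed, i.e. coordinate `n-1-k` in
0-indexing) for every column vector `v`. -/
theorem stmt_4 {K : Type*} [Field K] {n : ℕ} (hn : 1 ≤ n) (k : ℕ) (hk : k ≤ n - 1) :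
    BB (Matrix.of fun i j : Fin n => if (i : ℕ) = (j : ℕ) + 1 then (1 : K) else 0) k =
      (Matrix.of fun i j : Fin n => if (i : ℕ) = (j : ℕ) + 1 then (1 : K) else 0) ^ k ∧
    ∀ v : Fin n → K,
      fdef (Matrix.of fun i j : Fin n => if (i : ℕ) = (j : ℕ) + 1 then (1 : K) else 0)
        (Pi.single (⟨n - 1, by omega⟩ : Fin n) 1) v k = v ⟨n - 1 - k, by omega⟩ := by
  change BB (subdiagonalShift K n) k = subdiagonalShift K n ^ k ∧
    ∀ v, fdef (subdiagonalShift K n) _ v k = _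
  have hB : BB (subdiagonalShift K n) k = subdiagonalShift K n ^ k :=
    BB_eq_pow_of_isNilpotent isNilpotent_subdiagonalShift (by omega)
  refine ⟨hB, fun v => ?_⟩
  rw [fdef, hB, single_dotProduct, one_mul, subdiagonalShift_pow_mulVec_apply _ _ _ hk]
end

section
/- Let y_1,…,y_n ∈ U(L) be the images under ι of the standard basis vectors of V, and x_1,…,x_n ∈ U(L) the images of the dual basis vectors of V*. Let α be an element of the subalgebra of U(L) generated by ι(gl_n(k)) such that α commutes with ι(A) for every A ∈ gl_n(k). Then the element Σ_{i=1}^n (α·y_i − y_i·α)·x_i of U(L) commutes with ι(A) for every A ∈ gl_n(k). -/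
/-! `ad ι(A)` acts on the `yᵢ` through `A` and on the `xᵢ` through `-Aᵀ`, so by the Leibniz rule
every contraction `∑ᵢ βᵢ xᵢ` of a family `βᵢ` transforming like the `yᵢ` is `ad ι(A)`-invariant.
Since `α` commutes with `ι(A)`, the Jacobi identity shows that `βᵢ = ⁅α, yᵢ⁆` is such a family. -/

open Matrix

def CherLie (k : Type*) [Field k] (n : ℕ) : Type _ :=
  Matrix (Fin n) (Fin n) k × (Fin n → k) × (Fin n → k)

namespace CherLie

variable {k : Type*} [Field k] {n : ℕ}

instance : AddCommGroup (CherLie k n) :=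
  inferInstanceAs (AddCommGroup (Matrix (Fin n) (Fin n) k × (Fin n → k) × (Fin n → k)))

instance : Module k (CherLie k n) :=
  inferInstanceAs (Module k (Matrix (Fin n) (Fin n) k × (Fin n → k) × (Fin n → k)))

/-- The bracket `[(X₁,v₁,λ₁),(X₂,v₂,λ₂)] = ([X₁,X₂], X₁v₂ - X₂v₁, λ₁X₂ - λ₂X₁)`. -/
instance : Bracket (CherLie k n) (CherLie k n) :=
  ⟨fun a b =>
    (a.1 * b.1 - b.1 * a.1,
     a.1.mulVec b.2.1 - b.1.mulVec a.2.1,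
     vecMul a.2.2 b.1 - vecMul b.2.2 a.1)⟩

theorem bracket_def (a b : CherLie k n) :
    ⁅a, b⁆ = (a.1 * b.1 - b.1 * a.1,
      a.1.mulVec b.2.1 - b.1.mulVec a.2.1,
      vecMul a.2.2 b.1 - vecMul b.2.2 a.1) := rfl

private lemma vecMul_smul_right (x : Fin n → k) (t : k) (A : Matrix (Fin n) (Fin n) k) :
    vecMul x (t • A) = t • vecMul x A := by
  ext j
  simp [Matrix.vecMul, dotProduct, Finset.mul_sum, mul_left_comm]

instance : LieRing (CherLie k n) where
  add_lie a b c := by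
    refine Prod.ext ?_ (Prod.ext ?_ ?_)
    · show (a.1 + b.1) * c.1 - c.1 * (a.1 + b.1) =
        (a.1 * c.1 - c.1 * a.1) + (b.1 * c.1 - c.1 * b.1)
      noncomm_ring
    · show (a.1 + b.1).mulVec c.2.1 - c.1.mulVec (a.2.1 + b.2.1) =
        (a.1.mulVec c.2.1 - c.1.mulVec a.2.1) + (b.1.mulVec c.2.1 - c.1.mulVec b.2.1)
      simp only [Matrix.add_mulVec, Matrix.mulVec_add]
      abel
    · show vecMul (a.2.2 + b.2.2) c.1 - vecMul c.2.2 (a.1 + b.1) =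
        (vecMul a.2.2 c.1 - vecMul c.2.2 a.1) + (vecMul b.2.2 c.1 - vecMul c.2.2 b.1)
      simp only [Matrix.add_vecMul, Matrix.vecMul_add]
      abel
  lie_add a b c := by
    refine Prod.ext ?_ (Prod.ext ?_ ?_)
    · show a.1 * (b.1 + c.1) - (b.1 + c.1) * a.1 =
        (a.1 * b.1 - b.1 * a.1) + (a.1 * c.1 - c.1 * a.1)
      noncomm_ring
    · show a.1.mulVec (b.2.1 + c.2.1) - (b.1 + c.1).mulVec a.2.1 =
        (a.1.mulVec b.2.1 - b.1.mulVec a.2.1) + (a.1.mulVec c.2.1 - c.1.mulVec a.2.1)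
      simp only [Matrix.add_mulVec, Matrix.mulVec_add]
      abel
    · show vecMul a.2.2 (b.1 + c.1) - vecMul (b.2.2 + c.2.2) a.1 =
        (vecMul a.2.2 b.1 - vecMul b.2.2 a.1) + (vecMul a.2.2 c.1 - vecMul c.2.2 a.1)
      simp only [Matrix.add_vecMul, Matrix.vecMul_add]
      abel
  lie_self a := by
    refine Prod.ext ?_ (Prod.ext ?_ ?_) <;> simp [bracket_def] <;> rfl
  leibniz_lie a b c := by
    refine Prod.ext ?_ (Prod.ext ?_ ?_)
    · show a.1 * (b.1 * c.1 - c.1 * b.1) - (b.1 * c.1 - c.1 * b.1) * a.1 =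
        ((a.1 * b.1 - b.1 * a.1) * c.1 - c.1 * (a.1 * b.1 - b.1 * a.1)) +
          (b.1 * (a.1 * c.1 - c.1 * a.1) - (a.1 * c.1 - c.1 * a.1) * b.1)
      noncomm_ring
    · show a.1.mulVec (b.1.mulVec c.2.1 - c.1.mulVec b.2.1) -
          (b.1 * c.1 - c.1 * b.1).mulVec a.2.1 =
        ((a.1 * b.1 - b.1 * a.1).mulVec c.2.1 -
            c.1.mulVec (a.1.mulVec b.2.1 - b.1.mulVec a.2.1)) +
          (b.1.mulVec (a.1.mulVec c.2.1 - c.1.mulVec a.2.1) -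
            (a.1 * c.1 - c.1 * a.1).mulVec b.2.1)
      simp only [Matrix.mulVec_sub, Matrix.sub_mulVec, ← Matrix.mulVec_mulVec]
      abel
    · show vecMul a.2.2 (b.1 * c.1 - c.1 * b.1) -
          vecMul (vecMul b.2.2 c.1 - vecMul c.2.2 b.1) a.1 =
        ((vecMul (vecMul a.2.2 b.1 - vecMul b.2.2 a.1) c.1 -
            vecMul c.2.2 (a.1 * b.1 - b.1 * a.1)) +
          (vecMul b.2.2 (a.1 * c.1 - c.1 * a.1) -
            vecMul (vecMul a.2.2 c.1 - vecMul c.2.2 a.1) b.1))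
      simp only [Matrix.vecMul_sub, Matrix.sub_vecMul, Matrix.vecMul_vecMul]
      abel

instance : LieAlgebra k (CherLie k n) where
  lie_smul t a b := by
    refine Prod.ext ?_ (Prod.ext ?_ ?_)
    · show a.1 * (t • b.1) - (t • b.1) * a.1 = t • (a.1 * b.1 - b.1 * a.1)
      simp [mul_smul_comm, smul_mul_assoc, smul_sub]
    · show a.1.mulVec (t • b.2.1) - (t • b.1).mulVec a.2.1 =
        t • (a.1.mulVec b.2.1 - b.1.mulVec a.2.1)
      simp [Matrix.mulVec_smul, Matrix.smul_mulVec, smul_sub]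
    · show vecMul a.2.2 (t • b.1) - vecMul (t • b.2.2) a.1 =
        t • (vecMul a.2.2 b.1 - vecMul b.2.2 a.1)
      simp [Matrix.vecMul_smul, Matrix.smul_vecMul, vecMul_smul_right, smul_sub]


/-- Build an element of `L = gl_n(k) ⋉ (V ⊕ V*)` from a matrix `X ∈ gl_n(k)`, a column
vector `v ∈ V` and a row vector `l ∈ V*`. -/
def mk' (X : Matrix (Fin n) (Fin n) k) (v : Fin n → k) (l : Fin n → k) : CherLie k n :=
  (X, v, l)

end CherLie

attribute [local instance] LieRing.ofAssociativeRing

theorem Ring.lie_mul {A : Type*} [Ring A] (a b c : A) :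
    ⁅a, b * c⁆ = ⁅a, b⁆ * c + b * ⁅a, c⁆ := by
  simp only [Ring.lie_def]
  noncomm_ring

theorem lie_lie_comm_of_lie_eq_zero {L : Type*} [LieRing L] {a b : L} (h : ⁅a, b⁆ = 0) (c : L) :
    ⁅a, ⁅b, c⁆⁆ = ⁅b, ⁅a, c⁆⁆ := by
  rw [leibniz_lie, h, zero_lie, zero_add]

theorem lie_lie_eq_sum_of_lie_eq_zero {R L ι : Type*} [CommRing R] [LieRing L] [LieAlgebra R L]
    [Fintype ι] {c a : L} {M : Matrix ι ι R} {y : ι → L} (ha : ⁅c, a⁆ = 0)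
    (hy : ∀ i, ⁅c, y i⁆ = ∑ j, M j i • y j) (i : ι) :
    ⁅c, ⁅a, y i⁆⁆ = ∑ j, M j i • ⁅a, y j⁆ := by
  simp only [lie_lie_comm_of_lie_eq_zero ha, hy, lie_sum, lie_smul]

theorem lie_sum_mul_eq_zero_of_contragredient {R A ι : Type*} [CommRing R] [Ring A] [Algebra R A]
    [Fintype ι] {c : A} {M : Matrix ι ι R} {y x : ι → A}
    (hy : ∀ i, ⁅c, y i⁆ = ∑ j, M j i • y j) (hx : ∀ i, ⁅c, x i⁆ = -∑ j, M i j • x j) :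
    ⁅c, ∑ i, y i * x i⁆ = 0 := by
  simp only [lie_sum, Ring.lie_mul, hy, hx, Finset.sum_mul, Finset.mul_sum, mul_neg,
    smul_mul_assoc, mul_smul_comm, Finset.sum_add_distrib, Finset.sum_neg_distrib]
  rw [Finset.sum_comm]
  exact add_neg_cancel _

namespace CherLie

variable {k : Type*} [Field k] {n : ℕ}

theorem lie_mk'_vec (A : Matrix (Fin n) (Fin n) k) (v : Fin n → k) :
    ⁅mk' A 0 0, mk' 0 v 0⁆ = mk' 0 (A *ᵥ v) 0 := by
  rw [bracket_def]
  refine Prod.ext ?_ (Prod.ext ?_ ?_) <;> simp [mk']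

theorem lie_mk'_covec (A : Matrix (Fin n) (Fin n) k) (l : Fin n → k) :
    ⁅mk' A 0 0, mk' 0 0 l⁆ = mk' 0 0 (-(l ᵥ* A)) := by
  rw [bracket_def]
  refine Prod.ext ?_ (Prod.ext ?_ ?_) <;> simp [mk']

theorem mk'_vec_eq_sum (v : Fin n → k) :
    mk' 0 v 0 = ∑ j, v j • mk' 0 (Pi.single j 1) 0 := by
  let f : (Fin n → k) →ₗ[k] CherLie k n := (LinearMap.inr k _ _).comp (LinearMap.inl k _ _)
  change f v = ∑ j, v j • f (Pi.single j 1)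
  simp_rw [← map_smul, ← map_sum, ← pi_eq_sum_univ']

theorem mk'_covec_eq_sum (l : Fin n → k) :
    mk' 0 0 l = ∑ j, l j • mk' 0 0 (Pi.single j 1) := by
  let f : (Fin n → k) →ₗ[k] CherLie k n := (LinearMap.inr k _ _).comp (LinearMap.inr k _ _)
  change f l = ∑ j, l j • f (Pi.single j 1)
  simp_rw [← map_smul, ← map_sum, ← pi_eq_sum_univ']

open UniversalEnvelopingAlgebra

theorem lie_ι_mk'_single_vec (A : Matrix (Fin n) (Fin n) k) (i : Fin n) :
    ⁅ι k (mk' A 0 0), ι k (mk' 0 (Pi.single i (1 : k)) 0)⁆ =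
      ∑ j, A j i • ι k (mk' 0 (Pi.single j (1 : k)) 0) := by
  rw [← LieHom.map_lie, lie_mk'_vec, mk'_vec_eq_sum, map_sum]
  simp

theorem lie_ι_mk'_single_covec (A : Matrix (Fin n) (Fin n) k) (i : Fin n) :
    ⁅ι k (mk' A 0 0), ι k (mk' 0 0 (Pi.single i (1 : k)))⁆ =
      -∑ j, A i j • ι k (mk' 0 0 (Pi.single j (1 : k))) := by
  rw [← LieHom.map_lie, lie_mk'_covec, mk'_covec_eq_sum, map_sum]
  simp

end CherLie

theorem stmt_5_general {k : Type*} [Field k] {n : ℕ}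
    (α : UniversalEnvelopingAlgebra k (CherLie k n))
    (hcomm : ∀ A : Matrix (Fin n) (Fin n) k,
      α * UniversalEnvelopingAlgebra.ι k (CherLie.mk' A 0 0) =
        UniversalEnvelopingAlgebra.ι k (CherLie.mk' A 0 0) * α) :
    ∀ A : Matrix (Fin n) (Fin n) k,
      (∑ i : Fin n,
          (α * UniversalEnvelopingAlgebra.ι k (CherLie.mk' 0 (Pi.single i 1) 0) -
            UniversalEnvelopingAlgebra.ι k (CherLie.mk' 0 (Pi.single i 1) 0) * α) *
            UniversalEnvelopingAlgebra.ι k (CherLie.mk' 0 0 (Pi.single i 1))) *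
          UniversalEnvelopingAlgebra.ι k (CherLie.mk' A 0 0) =
        UniversalEnvelopingAlgebra.ι k (CherLie.mk' A 0 0) *
          ∑ i : Fin n,
            (α * UniversalEnvelopingAlgebra.ι k (CherLie.mk' 0 (Pi.single i 1) 0) -
              UniversalEnvelopingAlgebra.ι k (CherLie.mk' 0 (Pi.single i 1) 0) * α) *
              UniversalEnvelopingAlgebra.ι k (CherLie.mk' 0 0 (Pi.single i 1)) := by
  intro A
  have hA : ⁅UniversalEnvelopingAlgebra.ι k (CherLie.mk' A 0 0), α⁆ = 0 := by
    rw [Ring.lie_def, hcomm, sub_self]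
  refine (sub_eq_zero.mp ?_).symm
  exact lie_sum_mul_eq_zero_of_contragredient
    (lie_lie_eq_sum_of_lie_eq_zero hA (CherLie.lie_ι_mk'_single_vec A))
    (CherLie.lie_ι_mk'_single_covec A)

/-- let `y_1, …, y_n` be the images under `ι : L → U(L)` of the standard
basis of `V` and `x_1, …, x_n` the images of the dual basis of `V*`, where
`L = gl_n(k) ⋉ (V ⊕ V*)`.  If `α` lies in the subalgebra of `U(L)` generated by
`ι(gl_n(k))` and commutes with `ι(A)` for every `A ∈ gl_n(k)`, then
`∑ᵢ (α·yᵢ - yᵢ·α)·xᵢ` commutes with `ι(A)` for every `A ∈ gl_n(k)`. -/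
theorem stmt_5 {k : Type*} [Field k] [IsAlgClosed k] [CharZero k] {n : ℕ} (hn : 1 ≤ n)
    (α : UniversalEnvelopingAlgebra k (CherLie k n))
    (hα : α ∈ Algebra.adjoin k
      (Set.range fun M : Matrix (Fin n) (Fin n) k =>
        UniversalEnvelopingAlgebra.ι k (CherLie.mk' M 0 0)))
    (hcomm : ∀ A : Matrix (Fin n) (Fin n) k,
      α * UniversalEnvelopingAlgebra.ι k (CherLie.mk' A 0 0) =
        UniversalEnvelopingAlgebra.ι k (CherLie.mk' A 0 0) * α) :
    ∀ A : Matrix (Fin n) (Fin n) k,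
      (∑ i : Fin n,
          (α * UniversalEnvelopingAlgebra.ι k (CherLie.mk' 0 (Pi.single i 1) 0) -
            UniversalEnvelopingAlgebra.ι k (CherLie.mk' 0 (Pi.single i 1) 0) * α) *
            UniversalEnvelopingAlgebra.ι k (CherLie.mk' 0 0 (Pi.single i 1))) *
          UniversalEnvelopingAlgebra.ι k (CherLie.mk' A 0 0) =
        UniversalEnvelopingAlgebra.ι k (CherLie.mk' A 0 0) *
          ∑ i : Fin n,
            (α * UniversalEnvelopingAlgebra.ι k (CherLie.mk' 0 (Pi.single i 1) 0) -
              UniversalEnvelopingAlgebra.ι k (CherLie.mk' 0 (Pi.single i 1) 0) * α) *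
              UniversalEnvelopingAlgebra.ι k (CherLie.mk' 0 0 (Pi.single i 1)) :=
  stmt_5_general α hcomm
end

section
/- Regard each Q_k as an element of the polynomial ring k[x_{ab} : 1 ≤ a,b ≤ n] in the entries of the generic n×n matrix X. Then for all indices 1 ≤ i, j ≤ n and all 0 ≤ k ≤ n, the identity Σ_{t=1}^n Σ_{p=1}^n (∂²Q_k/∂x_{ip}∂x_{jt})·Y_t·Y_p = 0 holds in the polynomial ring k[x_{ab}][Y_1,…,Y_n]. -/
/-!
Write `D_a = ∑_t Y_t ∂/∂x_{at}`; the sum in question is `D_j (D_i Q_m)`. Applied coefficientwise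
to `det (t I - X)`, a derivation acts row by row, and `D_a` changes only row `a` of `t I - X`,
turning it into the constant row `-Y`. Applying `D_j` next either differentiates that constant
row (if `j = i`) or creates a second row `-Y` (if `j ≠ i`); either way the determinant vanishes.
-/

open Matrix

section

open Polynomial

namespace Derivation

variable {R A : Type*} [CommRing R] [CommRing A] [Algebra R A] (D : Derivation R A A)

theorem leibniz_prod {ι : Type*} [DecidableEq ι] (s : Finset ι) (f : ι → A) :
    D (∏ x ∈ s, f x) = ∑ x ∈ s, D (f x) * ∏ y ∈ s.erase x, f y := by
  induction s using Finset.induction_on with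
  | empty => simp
  | insert a s ha ih =>
    rw [Finset.prod_insert ha, leibniz, smul_eq_mul, smul_eq_mul, ih, Finset.sum_insert ha,
      Finset.erase_insert ha, Finset.mul_sum, add_comm]
    congr 1
    · exact mul_comm _ _
    · refine Finset.sum_congr rfl fun x hx => ?_
      rw [Finset.erase_insert_of_ne (ne_of_mem_of_not_mem hx ha).symm,
        Finset.prod_insert fun h => ha (Finset.mem_of_mem_erase h)]
      ring

theorem map_det {ι : Type*} [Fintype ι] [DecidableEq ι] (M : Matrix ι ι A) :
    D M.det = ∑ k, (M.updateRow k fun c => D (M k c)).det := by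
  simp only [det_apply, map_sum, Units.smul_def, map_zsmul]
  rw [Finset.sum_comm]
  refine Finset.sum_congr rfl fun σ _ => ?_
  rw [leibniz_prod, Finset.smul_sum,
    ← Equiv.sum_comp σ fun k => _ • ∏ i, (M.updateRow k fun c => D (M k c)) (σ i) i]
  refine Finset.sum_congr rfl fun x _ => ?_
  rw [← Finset.mul_prod_erase _ _ (Finset.mem_univ x), updateRow_self]
  congr 2
  refine Finset.prod_congr rfl fun y hy => ?_
  rw [updateRow_ne fun h => Finset.ne_of_mem_erase hy (σ.injective h)]

noncomputable def coeffwise : Derivation R A[X] A[X] :=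
  PolynomialModule.equivPolynomialSelf.toLinearMap.compDer D.mapCoeffs

@[simp]
theorem coeff_coeffwise (p : A[X]) (k : ℕ) : (D.coeffwise p).coeff k = D (p.coeff k) :=
  rfl

@[simp]
theorem coeffwise_C (a : A) : D.coeffwise (C a) = C (D a) := by
  ext k
  simp [coeff_C, apply_ite D]

theorem coeffwise_charmatrix_apply {ι : Type*} [Fintype ι] [DecidableEq ι] (M : Matrix ι ι A)
    (k c : ι) : D.coeffwise (charmatrix M k c) = -C (D (M k c)) := by
  ext l
  rcases eq_or_ne k c with rfl | hkc
  · simp [coeff_X, coeff_C, apply_ite D]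
  · simp [charmatrix_apply_ne _ _ _ hkc, coeff_C]

theorem map_det_eq_det_updateRow {ι : Type*} [Fintype ι] [DecidableEq ι]
    {M : Matrix ι ι A} {a : ι} {v : ι → A} (hD : ∀ k c, D (M k c) = if k = a then v c else 0) :
    D M.det = (M.updateRow a v).det := by
  rw [map_det, Finset.sum_eq_single a]
  · simp [hD]
  · intro k _ hk
    exact det_eq_zero_of_row_eq_zero k fun c => by simp [hD, hk]
  · simp

theorem map_map_det_eq_zero {ι : Type*} [Fintype ι] [DecidableEq ι] (D₁ D₂ : Derivation R A A)
    {M : Matrix ι ι A} {a b : ι} {v : ι → A}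
    (h₁ : ∀ k c, D₁ (M k c) = if k = a then v c else 0)
    (h₂ : ∀ k c, D₂ (M k c) = if k = b then v c else 0) (hv : ∀ c, D₂ (v c) = 0) :
    D₂ (D₁ M.det) = 0 := by
  rw [map_det_eq_det_updateRow D₁ h₁, map_det]
  refine Finset.sum_eq_zero fun k _ => ?_
  by_cases hka : k = a
  · subst hka
    exact det_eq_zero_of_row_eq_zero k fun c => by simp [hv]
  by_cases hkb : k = b
  · subst hkb
    refine det_zero_of_row_eq hka (funext fun c => ?_)
    simp [updateRow_ne hka, updateRow_ne (Ne.symm hka), h₂]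
  · exact det_eq_zero_of_row_eq_zero k fun c => by simp [updateRow_ne hka, h₂, hkb]

end Derivation

namespace MvPolynomial

theorem sumAlgEquiv_rename_inr {R S₁ S₂ : Type*} [CommSemiring R] (p : MvPolynomial S₂ R) :
    sumAlgEquiv R S₁ S₂ (rename Sum.inr p) = C p :=
  AlgHom.congr_fun (sumAlgEquiv_comp_rename_inr R S₁ S₂) p

variable (R : Type*) [CommRing R] {ι : Type*} [Fintype ι]

/-- With `X (.inl t)` playing `Y_t` and `X (.inr (a, b))` playing `x_{ab}`, this is the
derivation `∑_t Y_t ∂/∂x_{at}`. -/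
noncomputable def rowDeriv (a : ι) :
    Derivation R (MvPolynomial (ι ⊕ ι × ι) R) (MvPolynomial (ι ⊕ ι × ι) R) :=
  ∑ t : ι, (X (Sum.inl t) : MvPolynomial (ι ⊕ ι × ι) R) • pderiv (Sum.inr (a, t))

variable {R}

theorem rowDeriv_apply (a : ι) (F : MvPolynomial (ι ⊕ ι × ι) R) :
    rowDeriv R a F = ∑ t, X (Sum.inl t) * pderiv (Sum.inr (a, t)) F := by
  rw [rowDeriv, ← Derivation.coeFnAddMonoidHom_apply, map_sum, Finset.sum_apply]
  rfl

@[simp]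
theorem rowDeriv_X_inl (a t : ι) : rowDeriv R a (X (Sum.inl t)) = 0 := by
  simp [rowDeriv_apply]

@[simp]
theorem rowDeriv_X_inr [DecidableEq ι] (a k c : ι) :
    rowDeriv R a (X (Sum.inr (k, c))) = if k = a then X (Sum.inl c) else 0 := by
  rcases eq_or_ne k a with rfl | hka
  · simp [rowDeriv_apply, pderiv_X, Pi.single_apply]
  · simp [rowDeriv_apply, pderiv_X, hka]

theorem rowDeriv_rowDeriv (a b : ι) (F : MvPolynomial (ι ⊕ ι × ι) R) :
    rowDeriv R b (rowDeriv R a F) = ∑ t, ∑ p,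
      pderiv (Sum.inr (b, t)) (pderiv (Sum.inr (a, p)) F) * X (Sum.inl t) * X (Sum.inl p) := by
  rw [rowDeriv_apply]
  refine Finset.sum_congr rfl fun t _ => ?_
  rw [rowDeriv_apply, map_sum, Finset.mul_sum]
  refine Finset.sum_congr rfl fun p _ => ?_
  rw [Derivation.leibniz, pderiv_X_of_ne Sum.inl_ne_inr, smul_zero, add_zero, smul_eq_mul]
  ring

theorem rowDeriv_rowDeriv_coeff_charpoly [DecidableEq ι] (a b : ι) (k : ℕ) :
    rowDeriv R b (rowDeriv R a
      (((mvPolynomialX ι ι R).map (rename Sum.inr)).charpoly.coeff k)) = 0 := by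
  have hrow : ∀ a k c, (rowDeriv R a).coeffwise
      (charmatrix ((mvPolynomialX ι ι R).map (rename Sum.inr)) k c)
        = if k = a then -Polynomial.C (X (Sum.inl c) : MvPolynomial (ι ⊕ ι × ι) R) else 0 := by
    intro a k c
    rw [Derivation.coeffwise_charmatrix_apply]
    split_ifs <;> simp [*]
  rw [← Derivation.coeff_coeffwise, ← Derivation.coeff_coeffwise, charpoly,
    Derivation.map_map_det_eq_zero _ _ (hrow a) (hrow b) (by simp), Polynomial.coeff_zero]

end MvPolynomial

end

open MvPolynomial

theorem QQ_map {R S F : Type*} [CommRing R] [CommRing S] [FunLike F R S] [RingHomClass F R S]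
    {n : ℕ} (M : Matrix (Fin n) (Fin n) R) (f : F) (m : ℕ) : QQ (M.map f) m = f (QQ M m) := by
  have h := charpoly_map M (f : R →+* S)
  rw [RingHom.coe_coe] at h
  simp [QQ, h]

theorem QQ_eq_zsmul {R : Type*} [CommRing R] {n : ℕ} (M : Matrix (Fin n) (Fin n) R) (m : ℕ) :
    QQ M m = (-1 : ℤ) ^ m • M.charpoly.coeff (n - m) := by
  simp [QQ, zsmul_eq_mul]

theorem stmt_6_general {K : Type*} [Field K] {n : ℕ} (i j : Fin n) (m : ℕ) :
    ∑ t : Fin n, ∑ p : Fin n,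
      (MvPolynomial.C (MvPolynomial.pderiv (j, t) (MvPolynomial.pderiv (i, p)
          (QQ (Matrix.of fun a b : Fin n => MvPolynomial.X (R := K) (a, b)) m)))
        * MvPolynomial.X t * MvPolynomial.X p :
        MvPolynomial (Fin n) (MvPolynomial (Fin n × Fin n) K)) = 0 := by
  have hF : rowDeriv K j (rowDeriv K i
      (rename Sum.inr (QQ (mvPolynomialX (Fin n) (Fin n) K) m))) = 0 := by
    rw [← QQ_map, QQ_eq_zsmul, map_zsmul, map_zsmul,
      rowDeriv_rowDeriv_coeff_charpoly, smul_zero]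
  have hvanish := congrArg (sumAlgEquiv K (Fin n) (Fin n × Fin n)) hF
  rw [rowDeriv_rowDeriv, map_zero] at hvanish
  simp only [map_sum, map_mul, pderiv_rename Sum.inr_injective, sumAlgEquiv_X_inl,
    sumAlgEquiv_rename_inr] at hvanish
  exact hvanish

/-- viewing each `Q_m` as a polynomial in the entries `x_{ab}` of the
generic `n × n` matrix, for all `1 ≤ i, j ≤ n` and `0 ≤ m ≤ n` one has
`∑_t ∑_p (∂²Q_m/∂x_{ip}∂x_{jt}) · Y_t · Y_p = 0` in `k[x_{ab}][Y_1, …, Y_n]`. -/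
theorem stmt_6 {K : Type*} [Field K] {n : ℕ} (hn : 1 ≤ n) (i j : Fin n)
    (m : ℕ) (hm : m ≤ n) :
    ∑ t : Fin n, ∑ p : Fin n,
      (MvPolynomial.C (MvPolynomial.pderiv (j, t) (MvPolynomial.pderiv (i, p)
          (QQ (Matrix.of fun a b : Fin n => MvPolynomial.X (R := K) (a, b)) m)))
        * MvPolynomial.X t * MvPolynomial.X p :
        MvPolynomial (Fin n) (MvPolynomial (Fin n × Fin n) K)) = 0 :=
  stmt_6_general i j m
end

section
/- There exists a k-algebra derivation φ of U(g₁) such that φ(ι(M)) = (tr M / n)·1 for every M ∈ g₁ (equivalently, φ vanishes on the images of sl_n and of the translation part, and sends the image of the identity matrix of the gl_n-block to 1). Moreover φ is not inner: there is no u ∈ U(g₁) with u·ι(M) − ι(M)·u = (tr M / n)·1 for all M ∈ g₁. -/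
/-!
The derivation comes from the character `M ↦ tr M / n` of `g₁`, which kills brackets: the Lie
map `M ↦ ι M + (tr M / n) ε` into the dual numbers `U(g₁)[ε]` lifts to an algebra map whose
`ε`-component is the derivation. If it were inner, `[u, ι E] = 1` for the identity `E` of the
`gl_n`-block; pushing this to matrices along `U(g₁) → M_{n+1}(k)` and taking traces gives
`0 = n + 1`.
-/

open Matrix

attribute [local instance 100] LieRing.ofAssociativeRing

/-- The affine Lie algebra `g₁ = gl_n(k) ⋉ k^n`, realized as the Lie algebra of
`(n+1) × (n+1)` matrices over `k` whose last row is zero. -/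
def affLie (k : Type*) [Field k] (n : ℕ) :
    LieSubalgebra k (Matrix (Fin (n + 1)) (Fin (n + 1)) k) where
  carrier := {M | ∀ j, M (Fin.last n) j = 0}
  add_mem' := by
    intro a b ha hb j
    simp [Matrix.add_apply, ha j, hb j]
  zero_mem' := by intro j; simp
  smul_mem' := by
    intro c M hM j
    simp [Matrix.smul_apply, hM j]
  lie_mem' := by
    intro M N hM hN j
    simp only [Ring.lie_def, Matrix.sub_apply, Matrix.mul_apply]
    simp only [Set.mem_setOf_eq] at hM hN
    simp [hM, hN]

theorem Matrix.mul_sub_mul_ne_one {m R : Type*} [Fintype m] [DecidableEq m] [Nonempty m]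
    [CommRing R] [CharZero R] (A B : Matrix m m R) : A * B - B * A ≠ 1 := by
  intro h
  have htrace := congrArg trace h
  rw [trace_sub, trace_mul_comm, sub_self, trace_one] at htrace
  exact Nat.cast_ne_zero.mpr Fintype.card_ne_zero htrace.symm

namespace UniversalEnvelopingAlgebra

variable {R L : Type*} [CommRing R] [LieRing L] [LieAlgebra R L]

noncomputable def dualNumberLieHom (χ : L →ₗ[R] R) (hχ : ∀ x y : L, χ ⁅x, y⁆ = 0) :
    L →ₗ⁅R⁆ DualNumber (UniversalEnvelopingAlgebra R L) where
  toFun x := TrivSqZeroExt.inl (ι R x) + TrivSqZeroExt.inr (χ x • 1)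
  map_add' x y := by ext <;> simp [add_smul]
  map_smul' c x := by ext <;> simp [mul_smul]
  map_lie' {x y} := by
    ext
    · simp [Ring.lie_def]
    · simp [Ring.lie_def, hχ]
      abel

theorem exists_derivation_ι_eq_smul_one (χ : L →ₗ[R] R) (hχ : ∀ x y : L, χ ⁅x, y⁆ = 0) :
    ∃ φ : UniversalEnvelopingAlgebra R L →ₗ[R] UniversalEnvelopingAlgebra R L,
      (∀ a b, φ (a * b) = φ a * b + a * φ b) ∧ ∀ x, φ (ι R x) = χ x • 1 := by
  set Φ := lift R (dualNumberLieHom χ hχ)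
  have fst_comp_Φ : (TrivSqZeroExt.fstHom R _ _).comp Φ = AlgHom.id R _ :=
    hom_ext R <| LieHom.ext fun x => by simp [Φ, dualNumberLieHom]
  have fst_Φ (a) : (Φ a).fst = a := AlgHom.congr_fun fst_comp_Φ a
  refine ⟨{ toFun a := (Φ a).snd, map_add' a b := by simp, map_smul' c a := by simp },
    fun a b => ?_, fun x => ?_⟩
  · simp [TrivSqZeroExt.snd_mul, fst_Φ, add_comm]
  · simp [Φ, dualNumberLieHom]

theorem mul_ι_sub_ι_mul_ne_one {m : Type*} [Fintype m] [DecidableEq m] [Nonempty m] [CharZero R]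
    (ρ : L →ₗ⁅R⁆ Matrix m m R) (u : UniversalEnvelopingAlgebra R L) (x : L) :
    u * ι R x - ι R x * u ≠ 1 := by
  intro h
  apply Matrix.mul_sub_mul_ne_one (lift R ρ u) (ρ x)
  simpa using congrArg (lift R ρ) h

end UniversalEnvelopingAlgebra

open UniversalEnvelopingAlgebra

def affLie.glOne (k : Type*) [Field k] (n : ℕ) : affLie k n :=
  ⟨diagonal fun i => if i = Fin.last n then 0 else 1, fun j => by
    by_cases hj : j = Fin.last n <;> simp [hj, eq_comm]⟩

theorem affLie.trace_glOne (k : Type*) [Field k] (n : ℕ) :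
    trace (affLie.glOne k n : Matrix (Fin (n + 1)) (Fin (n + 1)) k) = n := by
  simp [affLie.glOne, Fin.sum_univ_castSucc, Fin.castSucc_ne_last]

theorem stmt_8_general {k : Type*} [Field k] [CharZero k] {n : ℕ} (hn : 1 ≤ n) :
    (∃ φ : UniversalEnvelopingAlgebra k (affLie k n) →ₗ[k]
        UniversalEnvelopingAlgebra k (affLie k n),
      (∀ a b, φ (a * b) = φ a * b + a * φ b) ∧
      (∀ M : affLie k n, φ (UniversalEnvelopingAlgebra.ι k M) =
        (Matrix.trace (M : Matrix (Fin (n + 1)) (Fin (n + 1)) k) / n) • 1)) ∧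
    ¬ (∃ u : UniversalEnvelopingAlgebra k (affLie k n),
      ∀ M : affLie k n,
        u * UniversalEnvelopingAlgebra.ι k M - UniversalEnvelopingAlgebra.ι k M * u =
          (Matrix.trace (M : Matrix (Fin (n + 1)) (Fin (n + 1)) k) / n) • 1) := by
  set χ : affLie k n →ₗ[k] k :=
    (n : k)⁻¹ • (traceLinearMap _ k k ∘ₗ (affLie k n).incl.toLinearMap)
  have hχ (M : affLie k n) : χ M = trace (M : Matrix (Fin (n + 1)) (Fin (n + 1)) k) / n := by
    simp [χ, div_eq_inv_mul]
  refine ⟨?_, ?_⟩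
  · obtain ⟨φ, hφ, hφι⟩ := exists_derivation_ι_eq_smul_one χ fun M N => by
      simp [χ, LieAlgebra.matrix_trace_commutator_zero]
    exact ⟨φ, hφ, fun M => by rw [hφι, hχ]⟩
  · rintro ⟨u, hu⟩
    apply mul_ι_sub_ι_mul_ne_one (affLie k n).incl u (affLie.glOne k n)
    rw [hu, affLie.trace_glOne, div_self (Nat.cast_ne_zero.mpr (by omega)), one_smul]

/-- (`k` algebraically closed, characteristic 0, `n ≥ 1`) there exists a
`k`-algebra derivation `φ` of `U(g₁)` with `φ(ι(M)) = (tr M / n)·1` for all `M ∈ g₁`,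
and moreover `φ` is not inner: no `u ∈ U(g₁)` satisfies
`u·ι(M) - ι(M)·u = (tr M / n)·1` for all `M ∈ g₁`. -/
theorem stmt_8 {k : Type*} [Field k] [IsAlgClosed k] [CharZero k] {n : ℕ} (hn : 1 ≤ n) :
    (∃ φ : UniversalEnvelopingAlgebra k (affLie k n) →ₗ[k]
        UniversalEnvelopingAlgebra k (affLie k n),
      (∀ a b, φ (a * b) = φ a * b + a * φ b) ∧
      (∀ M : affLie k n, φ (UniversalEnvelopingAlgebra.ι k M) =
        (Matrix.trace (M : Matrix (Fin (n + 1)) (Fin (n + 1)) k) / n) • 1)) ∧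
    ¬ (∃ u : UniversalEnvelopingAlgebra k (affLie k n),
      ∀ M : affLie k n,
        u * UniversalEnvelopingAlgebra.ι k M - UniversalEnvelopingAlgebra.ι k M * u =
          (Matrix.trace (M : Matrix (Fin (n + 1)) (Fin (n + 1)) k) / n) • 1) :=
  stmt_8_general hn
end

section
/- P is a semi-invariant of weight det⁻¹ for the coadjoint action of the affine group GL_n ⋉ V: for every invertible n×n matrix g one has P(gAg⁻¹, f·g⁻¹) = det(g)⁻¹·P(A,f), and for every column vector w ∈ k^n one has P(A + wf, f) = P(A,f), where wf denotes the rank-one n×n matrix obtained as the product of the column w and the row f. -/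
open Matrix

/-- `P A f` is the determinant of the `n × n` matrix whose `i`-th row is `f·A^(i-1)`
(rows `f, fA, fA², …, fA^(n-1)`). -/
noncomputable def PP {R : Type*} [CommRing R] {n : ℕ} (A : Matrix (Fin n) (Fin n) R)
    (f : Fin n → R) : R :=
  Matrix.det (Matrix.of fun i j : Fin n => vecMul f (A ^ (i : ℕ)) j)

/-!
Conjugating `A` by `g` and moving `f` to `f·g⁻¹` turns the row `f·Aⁱ` into `f·Aⁱ·g⁻¹`, so the
matrix of rows gets multiplied by `g⁻¹` on the right. Replacing `A` by `A + wf` changes the row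
`f·Aⁱ` only by a combination of the earlier rows `f·Aʲ`, `j < i`, so the matrix gets multiplied
on the left by a unitriangular matrix.
-/

namespace Matrix

variable {m R : Type*} [CommRing R] [Fintype m]

theorem det_eq_of_forall_row_sub_mem_span_Iio [LinearOrder m] {u v : m → m → R}
    (h : ∀ i, u i - v i ∈ Submodule.span R (v '' Set.Iio i)) : (of u).det = (of v).det := by
  choose l hl_supp hl using fun i => (Finsupp.mem_span_image_iff_linearCombination R).mp (h i)
  let C : Matrix m m R := of fun i j => l i j
  have hu : of u = (1 + C) * of v := by
    refine funext fun i => ?_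
    have hi := hl i
    rw [Finsupp.linearCombination_apply, Finsupp.sum_fintype _ _ fun j => zero_smul R (v j)] at hi
    rw [Matrix.add_mul, Matrix.one_mul]
    change u i = v i + C i ᵥ* of v
    rw [vecMul_eq_sum]
    change u i = v i + ∑ j, l i j • v j
    rw [hi, add_sub_cancel]
  have hC : ∀ i j, i ≤ j → C i j = 0 := fun i j hij =>
    Finsupp.notMem_support_iff.mp fun hj => (not_lt.mpr hij) (hl_supp i hj)
  have hlower : (1 + C).IsLowerTriangular := fun i j (hij : i < j) => by
    simp [one_apply_ne hij.ne, hC i j hij.le]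
  rw [hu, det_mul, det_of_isLowerTriangular _ hlower]
  simp [hC]

theorem vecMul_add_vecMulVec_pow_sub_mem_span [DecidableEq m] (A : Matrix m m R) (w f : m → R)
    (i : ℕ) :
    f ᵥ* (A + vecMulVec w f) ^ i - f ᵥ* A ^ i ∈
      Submodule.span R ((fun j => f ᵥ* A ^ j) '' Set.Iio i) := by
  induction i with
  | zero => simp
  | succ i ih =>
    set K := Submodule.span R ((fun j => f ᵥ* A ^ j) '' Set.Iio (i + 1))
    have hmul : ∀ x ∈ Submodule.span R ((fun j => f ᵥ* A ^ j) '' Set.Iio i), x ᵥ* A ∈ K := by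
      intro x hx
      have hxA := Submodule.mem_map_of_mem (f := A.vecMulLinear) hx
      rw [Submodule.map_span, Set.image_image] at hxA
      refine Submodule.span_mono ?_ hxA
      rintro _ ⟨j, hj, rfl⟩
      exact ⟨j + 1, Nat.succ_lt_succ hj, by simp [pow_succ, vecMul_vecMul]⟩
    have hf : f ∈ K := Submodule.subset_span ⟨0, Nat.succ_pos i, by simp⟩
    have hpow : f ᵥ* (A + vecMulVec w f) ^ (i + 1) - f ᵥ* A ^ (i + 1) =
        (f ᵥ* (A + vecMulVec w f) ^ i - f ᵥ* A ^ i) ᵥ* A +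
          (f ᵥ* (A + vecMulVec w f) ^ i ⬝ᵥ w) • f := by
      rw [pow_succ, pow_succ, ← vecMul_vecMul, ← vecMul_vecMul, vecMul_add, vecMul_vecMulVec,
        sub_vecMul]
      abel
    rw [hpow]
    exact K.add_mem (hmul _ ih) (K.smul_mem _ hf)

end Matrix

section PP

variable {R : Type*} [CommRing R] {n : ℕ}

theorem PP_units_conj (g : GL (Fin n) R) (A : Matrix (Fin n) (Fin n) R) (f : Fin n → R) :
    PP (g.val * A * g⁻¹.val) (f ᵥ* g⁻¹.val) = PP A f * g⁻¹.val.det := by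
  have hrows : (of fun i : Fin n => f ᵥ* g⁻¹.val ᵥ* (g.val * A * g⁻¹.val) ^ (i : ℕ)) =
      (of fun i : Fin n => f ᵥ* A ^ (i : ℕ)) * g⁻¹.val := by
    refine funext fun i => ?_
    change f ᵥ* g⁻¹.val ᵥ* (g.val * A * g⁻¹.val) ^ (i : ℕ) = f ᵥ* A ^ (i : ℕ) ᵥ* g⁻¹.val
    rw [Units.conj_pow, vecMul_vecMul, vecMul_vecMul, ← Matrix.mul_assoc, ← Matrix.mul_assoc,
      Units.inv_mul, Matrix.one_mul]
  exact (congrArg det hrows).trans (det_mul _ _)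

theorem PP_add_vecMulVec (A : Matrix (Fin n) (Fin n) R) (w f : Fin n → R) :
    PP (A + vecMulVec w f) f = PP A f := by
  refine det_eq_of_forall_row_sub_mem_span_Iio fun i => ?_
  refine Submodule.span_mono ?_ (vecMul_add_vecMulVec_pow_sub_mem_span A w f i)
  rintro _ ⟨j, hj, rfl⟩
  exact ⟨⟨j, hj.trans i.2⟩, hj, rfl⟩

end PP

theorem stmt_10_general {K : Type*} [Field K] {n : ℕ}
    (A : Matrix (Fin n) (Fin n) K) (f : Fin n → K) :
    (∀ g : GL (Fin n) K,
      PP ((g : Matrix (Fin n) (Fin n) K) * A * ((g⁻¹ : GL (Fin n) K) : Matrix (Fin n) (Fin n) K))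
        (vecMul f ((g⁻¹ : GL (Fin n) K) : Matrix (Fin n) (Fin n) K)) =
        ((g : Matrix (Fin n) (Fin n) K).det)⁻¹ * PP A f) ∧
    (∀ w : Fin n → K, PP (A + vecMulVec w f) f = PP A f) := by
  refine ⟨fun g => ?_, fun w => PP_add_vecMulVec A w f⟩
  rw [PP_units_conj, mul_comm, coe_units_inv, det_nonsing_inv, Ring.inverse_eq_inv']

/-- `P` is a semi-invariant of weight `det⁻¹` for the coadjoint action of
the affine group `GL_n ⋉ V`:  `P(gAg⁻¹, f·g⁻¹) = det(g)⁻¹·P(A,f)` for every invertible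
`g`, and `P(A + wf, f) = P(A,f)` for every column vector `w`. -/
theorem stmt_10 {K : Type*} [Field K] {n : ℕ} (hn : 1 ≤ n)
    (A : Matrix (Fin n) (Fin n) K) (f : Fin n → K) :
    (∀ g : GL (Fin n) K,
      PP ((g : Matrix (Fin n) (Fin n) K) * A * ((g⁻¹ : GL (Fin n) K) : Matrix (Fin n) (Fin n) K))
        (vecMul f ((g⁻¹ : GL (Fin n) K) : Matrix (Fin n) (Fin n) K)) =
        ((g : Matrix (Fin n) (Fin n) K).det)⁻¹ * PP A f) ∧
    (∀ w : Fin n → K, PP (A + vecMulVec w f) f = PP A f) :=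
  stmt_10_general A f
end

section
/- Suppose k is algebraically closed of characteristic 0. The zero locus Z = {(A,f) ∈ gl_n(k) × V* : P(A,f) = 0}, viewed as an affine algebraic set in affine space of dimension n² + n, is irreducible; equivalently, the vanishing ideal of Z in the polynomial ring in the entries of A and f is a prime ideal. -/
open Matrix

/-!
`PP A f` vanishes iff `A` has an eigenvector `w` with `f ⬝ᵥ w = 0`: the kernel of the matrix with
rows `f Aⁱ` is `A`-stable by Cayley–Hamilton, so over an algebraically closed field it contains an
eigenvector as soon as it is nonzero. Conjugating `w` to `e₀`, such pairs are exactly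
`(adj g * B * g, c ᵥ* g)` with `B e₀ ∈ K e₀`, `c 0 = 0` and `g` invertible; for singular `g` these
formulas still land in the zero locus, and using the adjugate instead of `g⁻¹` makes them a
polynomial map from an affine space onto the zero locus. The vanishing ideal of the image of a
polynomial map over an infinite field is the kernel of the corresponding map of polynomial rings
into a domain, hence prime.
-/

open MvPolynomial in
theorem MvPolynomial.vanishingIdeal_range_aeval_eq_ker {K σ τ : Type*} [Field K] [Infinite K]
    (Φ : τ → MvPolynomial σ K) :
    vanishingIdeal K (Set.range fun (x : σ → K) t => aeval x (Φ t)) = RingHom.ker (bind₁ Φ) := by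
  ext p
  simp only [mem_vanishingIdeal_iff, Set.forall_mem_range, RingHom.mem_ker, ← aeval_bind₁]
  rw [MvPolynomial.funext_iff]
  simp

theorem MvPolynomial.isPrime_vanishingIdeal_range_aeval {K σ τ : Type*} [Field K] [Infinite K]
    (Φ : τ → MvPolynomial σ K) :
    (vanishingIdeal K (Set.range fun (x : σ → K) t => aeval x (Φ t))).IsPrime := by
  rw [vanishingIdeal_range_aeval_eq_ker]
  exact RingHom.ker_isPrime _

theorem exists_linearEquiv_apply_eq {K V : Type*} [Field K] [AddCommGroup V] [Module K V]
    [FiniteDimensional K V] {v w : V} (hv : v ≠ 0) (hw : w ≠ 0) :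
    ∃ g : V ≃ₗ[K] V, g v = w := by
  obtain ⟨g, hg⟩ := Submodule.exists_linearEquiv_restrict_eq
    ((LinearEquiv.coord K V v hv).trans (LinearEquiv.toSpanNonzeroSingleton K V w hw))
  refine ⟨g, ?_⟩
  simpa [LinearEquiv.coord_self] using (hg ⟨v, Submodule.mem_span_singleton_self v⟩).symm

theorem Module.End.exists_hasEigenvector_mem_of_mapsTo {K V : Type*} [Field K] [IsAlgClosed K]
    [AddCommGroup V] [Module K V] [FiniteDimensional K V] (f : Module.End K V)
    {S : Submodule K V} (hS : S ≠ ⊥) (hf : ∀ v ∈ S, f v ∈ S) :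
    ∃ μ v, v ∈ S ∧ f.HasEigenvector μ v := by
  have : Nontrivial S := Submodule.nontrivial_iff_ne_bot.mpr hS
  obtain ⟨μ, hμ⟩ := Module.End.exists_eigenvalue (f.restrict hf)
  obtain ⟨v, hv⟩ := hμ.exists_hasEigenvector
  refine ⟨μ, v, v.2, ?_, ?_⟩
  · simpa [Module.End.mem_eigenspace_iff, LinearMap.restrict_apply, Subtype.ext_iff] using
      Module.End.mem_eigenspace_iff.mp hv.1
  · simpa using hv.2

section Krylov

variable {R : Type*} [CommRing R] {n : ℕ}

def Matrix.krylovMatrix (A : Matrix (Fin n) (Fin n) R) (f : Fin n → R) : Matrix (Fin n) (Fin n) R :=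
  of fun i : Fin n => f ᵥ* A ^ (i : ℕ)

theorem PP_eq_det_krylovMatrix (A : Matrix (Fin n) (Fin n) R) (f : Fin n → R) :
    PP A f = (krylovMatrix A f).det := rfl

theorem Matrix.krylovMatrix_mulVec_apply (A : Matrix (Fin n) (Fin n) R) (f v : Fin n → R)
    (i : Fin n) :
    (krylovMatrix A f *ᵥ v) i = f ⬝ᵥ (A ^ (i : ℕ) *ᵥ v) :=
  (dotProduct_mulVec f _ v).symm

theorem Matrix.dotProduct_pow_mulVec_eq_zero_of_forall_lt {A : Matrix (Fin n) (Fin n) R}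
    {f v : Fin n → R} (h : ∀ i < n, f ⬝ᵥ (A ^ i *ᵥ v) = 0) (k : ℕ) : f ⬝ᵥ (A ^ k *ᵥ v) = 0 := by
  nontriviality R
  obtain rfl | hn := eq_or_ne n 0
  · simp [dotProduct]
  have hdeg : (Polynomial.X ^ k %ₘ A.charpoly).natDegree < n := by
    simpa using Polynomial.natDegree_modByMonic_lt _ A.charpoly_monic fun h => hn (by
      simpa using congrArg Polynomial.natDegree h)
  rw [pow_eq_aeval_mod_charpoly, Polynomial.aeval_eq_sum_range' hdeg, sum_mulVec, dotProduct_sum]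
  exact Finset.sum_eq_zero fun i hi => by
    rw [smul_mulVec, dotProduct_smul, h i (Finset.mem_range.mp hi), smul_zero]

theorem Matrix.krylovMatrix_mulVec_eq_zero_iff {A : Matrix (Fin n) (Fin n) R} {f v : Fin n → R} :
    krylovMatrix A f *ᵥ v = 0 ↔ ∀ k : ℕ, f ⬝ᵥ (A ^ k *ᵥ v) = 0 := by
  refine ⟨fun h => dotProduct_pow_mulVec_eq_zero_of_forall_lt fun i hi => ?_,
    fun h => funext fun i => ?_⟩
  · rw [← krylovMatrix_mulVec_apply A f v ⟨i, hi⟩, h, Pi.zero_apply]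
  · rw [krylovMatrix_mulVec_apply, h, Pi.zero_apply]

end Krylov

section Field

variable {K : Type*} [Field K] {n : ℕ} {A : Matrix (Fin n) (Fin n) K} {f : Fin n → K}

theorem PP_eq_zero_of_hasEigenvector {μ : K} {v : Fin n → K}
    (hv : Module.End.HasEigenvector (toLin' A) μ v) (hfv : f ⬝ᵥ v = 0) : PP A f = 0 := by
  rw [PP_eq_det_krylovMatrix, ← exists_mulVec_eq_zero_iff]
  refine ⟨v, hv.2, krylovMatrix_mulVec_eq_zero_iff.mpr fun k => ?_⟩
  rw [← toLin'_apply, toLin'_pow, hv.pow_apply, dotProduct_smul, hfv, smul_zero]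

theorem exists_hasEigenvector_of_PP_eq_zero [IsAlgClosed K] (h : PP A f = 0) :
    ∃ μ v, Module.End.HasEigenvector (toLin' A) μ v ∧ f ⬝ᵥ v = 0 := by
  rw [PP_eq_det_krylovMatrix, ← exists_mulVec_eq_zero_iff] at h
  obtain ⟨v, hv, hMv⟩ := h
  have hker : LinearMap.ker (toLin' (krylovMatrix A f)) ≠ ⊥ :=
    fun h => hv (LinearMap.ker_eq_bot'.mp h v hMv)
  obtain ⟨μ, w, hwker, hw⟩ := Module.End.exists_hasEigenvector_mem_of_mapsTo (toLin' A) hker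
    fun u hu => by
      simp only [LinearMap.mem_ker, toLin'_apply] at hu ⊢
      rw [krylovMatrix_mulVec_eq_zero_iff] at hu ⊢
      exact fun k => by rw [mulVec_mulVec, ← pow_succ]; exact hu (k + 1)
  exact ⟨μ, w, hw, by simpa using krylovMatrix_mulVec_eq_zero_iff.mp hwker 0⟩

end Field

section FirstColumn

variable {R : Type*} [CommRing R] {n : ℕ} [NeZero n]

def Matrix.clearFirstColTail (B : Matrix (Fin n) (Fin n) R) : Matrix (Fin n) (Fin n) R :=
  of fun i j => if j = 0 ∧ i ≠ 0 then 0 else B i j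

theorem Matrix.clearFirstColTail_mulVec_single (B : Matrix (Fin n) (Fin n) R) :
    clearFirstColTail B *ᵥ Pi.single 0 1 = B 0 0 • Pi.single 0 1 := by
  ext i
  rcases eq_or_ne i 0 with rfl | hi <;> simp [clearFirstColTail, *]

theorem Matrix.clearFirstColTail_eq_self {B : Matrix (Fin n) (Fin n) R} (hB : ∀ i ≠ 0, B i 0 = 0) :
    clearFirstColTail B = B := by
  ext i j
  simp only [clearFirstColTail, of_apply, ite_eq_right_iff, and_imp]
  rintro rfl hi
  exact (hB i hi).symm

theorem Matrix.map_clearFirstColTail {S : Type*} [CommRing S] (φ : R →+* S)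
    (B : Matrix (Fin n) (Fin n) R) :
    (clearFirstColTail B).map φ = clearFirstColTail (B.map φ) := by
  ext i j
  simp only [clearFirstColTail, map_apply, of_apply, apply_ite φ, map_zero]

theorem Matrix.exists_mulVec_eq_smul_single {K : Type*} [Field K] (g : Matrix (Fin n) (Fin n) K) :
    ∃ w ≠ 0, ∃ s : K, g *ᵥ w = s • Pi.single 0 1 := by
  by_cases hg : g.det = 0
  · obtain ⟨w, hw, hgw⟩ := exists_mulVec_eq_zero_iff.mpr hg
    exact ⟨w, hw, 0, by rw [hgw, zero_smul]⟩
  · have hgw : g *ᵥ (g⁻¹ *ᵥ Pi.single 0 1) = Pi.single 0 1 := by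
      rw [mulVec_mulVec, mul_nonsing_inv _ (isUnit_iff_ne_zero.mpr hg), one_mulVec]
    refine ⟨g⁻¹ *ᵥ Pi.single 0 1, fun h => ?_, 1, by rw [hgw, one_smul]⟩
    rw [h, mulVec_zero] at hgw
    simpa using congrFun hgw 0

theorem PP_adjugate_mul_clearFirstColTail_mul_eq_zero {K : Type*} [Field K]
    (g B : Matrix (Fin n) (Fin n) K) (c : Fin n → K) :
    PP (adjugate g * clearFirstColTail B * g) (Function.update c 0 0 ᵥ* g) = 0 := by
  obtain ⟨w, hw, s, hgw⟩ := exists_mulVec_eq_smul_single g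
  refine PP_eq_zero_of_hasEigenvector (μ := B 0 0 * g.det) (v := w) ⟨?_, hw⟩ ?_
  · rw [Module.End.mem_eigenspace_iff, toLin'_apply]
    calc (adjugate g * clearFirstColTail B * g) *ᵥ w
        = adjugate g *ᵥ (clearFirstColTail B *ᵥ (s • Pi.single 0 1)) := by
          rw [← hgw, mulVec_mulVec, mulVec_mulVec]
      _ = B 0 0 • (adjugate g *ᵥ (g *ᵥ w)) := by
          rw [mulVec_smul, clearFirstColTail_mulVec_single, hgw, smul_comm, mulVec_smul]
      _ = (B 0 0 * g.det) • w := by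
          rw [mulVec_mulVec, adjugate_mul, smul_mulVec, one_mulVec, smul_smul]
  · rw [← dotProduct_mulVec, hgw, dotProduct_smul, dotProduct_single]
    simp

theorem exists_adjugate_mul_clearFirstColTail_mul_eq {K : Type*} [Field K]
    {A : Matrix (Fin n) (Fin n) K} {f : Fin n → K} {μ : K} {v : Fin n → K}
    (hv : Module.End.HasEigenvector (toLin' A) μ v) (hfv : f ⬝ᵥ v = 0) :
    ∃ g B c, adjugate g * clearFirstColTail B * g = A ∧ Function.update c 0 0 ᵥ* g = f := by
  obtain ⟨e, he⟩ :=
    exists_linearEquiv_apply_eq (K := K) (Pi.single_ne_zero_iff.mpr one_ne_zero) hv.2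
  set h := LinearMap.toMatrix' (e : (Fin n → K) →ₗ[K] Fin n → K)
  set g := LinearMap.toMatrix' (e.symm : (Fin n → K) →ₗ[K] Fin n → K)
  have hgh : g * h = 1 := by
    rw [← LinearMap.toMatrix'_comp, LinearEquiv.comp_coe, LinearEquiv.self_trans_symm]
    exact LinearMap.toMatrix'_id
  have hhg : h * g = 1 := mul_eq_one_comm.mp hgh
  have hhv : h *ᵥ Pi.single 0 1 = v := by rw [LinearMap.toMatrix'_mulVec]; exact he
  have hdet : g.det ≠ 0 := by
    intro h0
    simpa [h0] using congrArg det hgh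
  have hadj : adjugate g = g.det • h := by
    rw [← Matrix.mul_one (adjugate g), ← hgh, ← Matrix.mul_assoc, adjugate_mul, smul_mul,
      Matrix.one_mul]
  have hAv : A *ᵥ v = μ • v := by simpa using Module.End.mem_eigenspace_iff.mp hv.1
  refine ⟨g, g.det⁻¹ • (g * A * h), f ᵥ* h, ?_, ?_⟩
  · rw [clearFirstColTail_eq_self]
    · simp only [hadj, Matrix.smul_mul, Matrix.mul_smul, smul_smul, inv_mul_cancel₀ hdet, one_smul,
        Matrix.mul_assoc, ← Matrix.mul_assoc h g, hhg, Matrix.one_mul, Matrix.mul_one]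
    · intro i hi
      have : (g * A * h) *ᵥ Pi.single 0 1 = μ • Pi.single 0 1 := by
        rw [← mulVec_mulVec, hhv, ← mulVec_mulVec, hAv, mulVec_smul, ← hhv, mulVec_mulVec, hgh,
          one_mulVec]
      simpa [mulVec_single_one, hi, hdet] using congrFun this i
  · rw [Function.update_eq_self_iff.mpr, vecMul_vecMul, hhg, vecMul_one]
    rw [← hfv, ← hhv, dotProduct_mulVec, dotProduct_single, mul_one]

end FirstColumn

section ZeroLocus

variable {R : Type*} [CommRing R] {n : ℕ} [NeZero n]

def zeroLocusParam (x : (Fin n × Fin n) ⊕ ((Fin n × Fin n) ⊕ Fin n) → R) :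
    (Fin n × Fin n) ⊕ Fin n → R :=
  let g : Matrix (Fin n) (Fin n) R := of fun i j => x (.inl (i, j))
  let B : Matrix (Fin n) (Fin n) R := of fun i j => x (.inr (.inl (i, j)))
  let c : Fin n → R := fun i => x (.inr (.inr i))
  Sum.elim (fun p => (adjugate g * clearFirstColTail B * g) p.1 p.2)
    (Function.update c 0 0 ᵥ* g)

theorem map_zeroLocusParam {S : Type*} [CommRing S] (φ : R →+* S)
    (x : (Fin n × Fin n) ⊕ ((Fin n × Fin n) ⊕ Fin n) → R) :
    φ ∘ zeroLocusParam x = zeroLocusParam (φ ∘ x) := by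
  have hmap (g B : Matrix (Fin n) (Fin n) R) :
      (adjugate g * clearFirstColTail B * g).map φ =
        adjugate (g.map φ) * clearFirstColTail (B.map φ) * g.map φ := by
    rw [Matrix.map_mul, Matrix.map_mul, map_clearFirstColTail]
    congr 2
    exact RingHom.map_adjugate φ g
  funext t
  rcases t with ⟨i, j⟩ | i
  · exact congrFun₂ (hmap _ _) i j
  · simp only [zeroLocusParam, Function.comp_apply, Sum.elim_inr, RingHom.map_vecMul,
      Function.comp_update, map_zero]
    rfl

theorem range_zeroLocusParam_eq_range_aeval {K : Type*} [Field K] :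
    Set.range (zeroLocusParam (R := K) (n := n)) =
      Set.range fun x t =>
        MvPolynomial.aeval x (zeroLocusParam (MvPolynomial.X (R := K)) t) := by
  congr 1
  funext x
  have h := map_zeroLocusParam (MvPolynomial.aeval (R := K) x).toRingHom MvPolynomial.X
  rw [show (MvPolynomial.aeval x).toRingHom ∘ MvPolynomial.X = x from
    funext fun _ => MvPolynomial.aeval_X _ _] at h
  exact h.symm

theorem setOf_PP_eq_zero_eq_range_zeroLocusParam {K : Type*} [Field K] [IsAlgClosed K] :
    {y : (Fin n × Fin n) ⊕ Fin n → K |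
        PP (of fun i j => y (.inl (i, j))) (fun i => y (.inr i)) = 0} =
      Set.range zeroLocusParam := by
  ext y
  constructor
  · intro hy
    obtain ⟨μ, v, hv, hfv⟩ := exists_hasEigenvector_of_PP_eq_zero hy
    obtain ⟨g, B, c, hA, hf⟩ := exists_adjugate_mul_clearFirstColTail_mul_eq hv hfv
    refine ⟨Sum.elim (fun p => g p.1 p.2) (Sum.elim (fun p => B p.1 p.2) c), funext ?_⟩
    rintro (⟨i, j⟩ | i)
    · exact congrFun₂ hA i j
    · exact congrFun hf i
  · rintro ⟨x, rfl⟩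
    exact PP_adjugate_mul_clearFirstColTail_mul_eq_zero _ _ _

end ZeroLocus

theorem stmt_12_general {K : Type*} [Field K] [IsAlgClosed K] {n : ℕ} (hn : 1 ≤ n) :
    (MvPolynomial.vanishingIdeal K
      {x : ((Fin n × Fin n) ⊕ Fin n) → K |
        PP (Matrix.of fun i j : Fin n => x (Sum.inl (i, j))) (fun i => x (Sum.inr i)) = 0}).IsPrime := by
  have : NeZero n := ⟨Nat.one_le_iff_ne_zero.mp hn⟩
  rw [setOf_PP_eq_zero_eq_range_zeroLocusParam, range_zeroLocusParam_eq_range_aeval]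
  exact MvPolynomial.isPrime_vanishingIdeal_range_aeval _

/-- (`k` algebraically closed of characteristic 0) the zero locus
`Z = {(A,f) : P(A,f) = 0}` in affine `(n² + n)`-space is irreducible; equivalently, its
vanishing ideal in the polynomial ring in the entries of `A` and `f` is prime. -/
theorem stmt_12 {K : Type*} [Field K] [IsAlgClosed K] [CharZero K] {n : ℕ} (hn : 1 ≤ n) :
    (MvPolynomial.vanishingIdeal K
      {x : ((Fin n × Fin n) ⊕ Fin n) → K |
        PP (Matrix.of fun i j : Fin n => x (Sum.inl (i, j))) (fun i => x (Sum.inr i)) = 0}).IsPrime :=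
  stmt_12_general hn
end

section
/- For every m ≥ 1 the polynomial P_m(t) has the form P_m(t) = −t^{n+m} + Σ_{j=0}^{n−1} η_m^j t^j (that is, η_m^{n+m} = −1 and η_m^j = 0 for n ≤ j ≤ n+m−1). Moreover P_m(λ_r) = 0 for each r, so each λ_r satisfies the monic integral relation λ_r^{n+m} = Σ_{j=0}^{n−1} η_m^j λ_r^j over the subalgebra k[η_m^0,…,η_m^{n−1}]. Consequently, for every m ≥ 1 the polynomial ring k[λ_1,…,λ_n] is a finitely generated module over its subalgebra generated by η_m^0, η_m^1, …, η_m^{n−1}. -/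
/-!
Up to sign, the series is `F_s = ∏_{i ∈ s} (t - x_i) · (1 - tτ)⁻¹ · ∏_{i ∈ s} (1 - x_i τ)⁻¹`
with `s` all the variables. Since `(t - a) (1 - tτ)⁻¹ (1 - aτ)⁻¹ = ((1 - tτ)⁻¹ - (1 - aτ)⁻¹) / τ`,
adding a root `a` to `s` gives `τ F_{s ∪ {a}} = F_s - ∏_{i ∈ s} (t - x_i) · G` with `G` a series
with constant coefficients. By induction on `s`, the `τ^m`-coefficient of `F_s` is therefore
`t^(|s| + m)` plus a polynomial of degree `< |s|`. It is a multiple of `∏ (t - x_i)`, so it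
vanishes at every `x_i`: each variable satisfies a monic equation over the `η_m^j`, and a
polynomial ring with integral generators is a finite module.
-/

/-- The element `∏_{i=1}^n (t - λ_i) · (-∑_{a≥0} t^a τ^a) · ∏_{i=1}^n (∑_{s≥0} λ_i^s τ^s)`
of `k[λ_1,…,λ_n][t]⟦τ⟧`, i.e. the expansion of
`∏ (t - λ_i) / ((tτ - 1)·∏ (1 - τλ_i))` as a power series in `τ`. -/
noncomputable def EE (k : Type*) [Field k] (n : ℕ) :
    PowerSeries (Polynomial (MvPolynomial (Fin n) k)) :=
  (PowerSeries.C (∏ i : Fin n, (Polynomial.X - Polynomial.C (MvPolynomial.X i)))) *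
    (PowerSeries.mk fun a => -(Polynomial.X ^ a)) *
    ∏ i : Fin n, PowerSeries.mk fun s => Polynomial.C (MvPolynomial.X i ^ s)

/-- `Pm k n m = P_m(t) ∈ k[λ_1,…,λ_n][t]`, the coefficient of `τ^m` in the above
expansion; its `t`-coefficients are the symmetric polynomials `η_m^j`. -/
noncomputable def Pm (k : Type*) [Field k] (n m : ℕ) :
    Polynomial (MvPolynomial (Fin n) k) :=
  PowerSeries.coeff m (EE k n)

open Polynomial

namespace PowerSeries

variable {S : Type*} [CommRing S]

noncomputable def geom (y : S) : PowerSeries S :=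
  mk fun k => y ^ k

theorem map_geom {T : Type*} [CommRing T] (f : S →+* T) (y : S) :
    map f (geom y) = geom (f y) := by
  ext k
  simp [geom]

theorem X_mul_C_mul_geom (y : S) : X * C y * geom y = geom y - 1 := by
  ext (_ | k)
  · simp [geom]
  · rw [mul_assoc, coeff_succ_X_mul, coeff_C_mul]
    simp [geom, pow_succ, mul_comm]

theorem X_mul_C_sub_mul_geom_mul_geom (y z : S) :
    X * C (y - z) * geom y * geom z = geom y - geom z := by
  rw [map_sub]
  linear_combination geom z * X_mul_C_mul_geom y - geom y * X_mul_C_mul_geom z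

end PowerSeries

open PowerSeries (geom)

section RootSeries

variable {R ι : Type*} [CommRing R] (x : ι → R)

noncomputable def rootSeries (s : Finset ι) : PowerSeries R[X] :=
  PowerSeries.C (∏ i ∈ s, (X - C (x i))) * geom X *
    PowerSeries.map C (∏ i ∈ s, geom (x i))

theorem X_mul_rootSeries_insert [DecidableEq ι] {a : ι} {s : Finset ι} (ha : a ∉ s) :
    PowerSeries.X * rootSeries x (insert a s) = rootSeries x s -
      PowerSeries.C (∏ i ∈ s, (X - C (x i))) *
        PowerSeries.map C (geom (x a) * ∏ i ∈ s, geom (x i)) := by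
  simp only [rootSeries, Finset.prod_insert ha, map_mul, PowerSeries.map_geom]
  linear_combination PowerSeries.C (∏ i ∈ s, (X - C (x i))) *
    PowerSeries.map C (∏ i ∈ s, geom (x i)) *
    PowerSeries.X_mul_C_sub_mul_geom_mul_geom (X : R[X]) (C (x a))

theorem natDegree_prod_X_sub_C_le (s : Finset ι) :
    (∏ i ∈ s, (X - C (x i))).natDegree ≤ s.card :=
  (natDegree_prod_le _ _).trans <|
    (Finset.sum_le_sum fun _ _ => natDegree_X_sub_C_le _).trans (by simp)

theorem coeff_rootSeries_sub_X_pow_mem_degreeLT (s : Finset ι) (m : ℕ) :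
    PowerSeries.coeff m (rootSeries x s) - X ^ (s.card + m) ∈ degreeLT R s.card := by
  classical
  induction s using Finset.induction_on generalizing m with
  | empty => simp [rootSeries, geom]
  | insert a s ha ih =>
    have hcoeff := congrArg (PowerSeries.coeff (m + 1)) (X_mul_rootSeries_insert x ha)
    rw [PowerSeries.coeff_succ_X_mul, map_sub, PowerSeries.coeff_C_mul,
      PowerSeries.coeff_map] at hcoeff
    have hprod : (∏ i ∈ s, (X - C (x i))) *
        C (PowerSeries.coeff (m + 1) (geom (x a) * ∏ i ∈ s, geom (x i))) ∈
          degreeLT R (s.card + 1) := by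
      rw [degreeLT_succ_eq_degreeLE, mem_degreeLE]
      exact degree_le_of_natDegree_le ((natDegree_mul_C_le _ _).trans
        (natDegree_prod_X_sub_C_le x s))
    rw [hcoeff, Finset.card_insert_of_notMem ha, add_right_comm, add_assoc]
    convert sub_mem (degreeLT_mono s.card.le_succ (ih (m + 1))) hprod using 1
    ring

theorem X_sub_C_dvd_coeff_rootSeries {s : Finset ι} {i : ι} (hi : i ∈ s) (m : ℕ) :
    X - C (x i) ∣ PowerSeries.coeff m (rootSeries x s) := by
  rw [rootSeries, mul_assoc, PowerSeries.coeff_C_mul]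
  exact (Finset.dvd_prod_of_mem _ hi).mul_right _

end RootSeries

theorem EE_eq_neg_rootSeries (k : Type*) [Field k] (n : ℕ) :
    EE k n = -rootSeries MvPolynomial.X Finset.univ := by
  have hgeom : (PowerSeries.mk fun a => -(X ^ a) : PowerSeries (MvPolynomial (Fin n) k)[X]) =
      -geom X := by
    ext; simp [geom]
  simp only [EE, rootSeries, hgeom, map_prod, PowerSeries.map_geom]
  simp only [geom, map_pow]
  ring

theorem Pm_eq_neg_coeff_rootSeries (k : Type*) [Field k] (n m : ℕ) :
    Pm k n m = -PowerSeries.coeff m (rootSeries MvPolynomial.X Finset.univ) := by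
  rw [Pm, EE_eq_neg_rootSeries, map_neg]

theorem eq_neg_X_pow_add_sum_of_add_X_pow_mem_degreeLT {R : Type*} [CommRing R] {p : R[X]}
    {n N : ℕ} (hnN : n ≤ N) (hp : p + X ^ N ∈ degreeLT R n) :
    p = -X ^ N + ∑ j ∈ Finset.range n, C (p.coeff j) * X ^ j := by
  rw [mem_degreeLT] at hp
  ext i
  simp only [coeff_add, coeff_neg, coeff_X_pow, finsetSum_coeff, coeff_C_mul_X_pow,
    Finset.sum_ite_eq, Finset.mem_range]
  by_cases hi : i < n
  · simp [hi, (hi.trans_le hnN).ne]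
  · have := coeff_eq_zero_of_degree_lt (hp.trans_le (by exact_mod_cast not_lt.mp hi))
    rw [coeff_add, coeff_X_pow] at this
    rw [if_neg hi, add_zero]
    linear_combination this

theorem isIntegral_of_pow_eq_sum {R A : Type*} [CommRing R] [Ring A] [Algebra R A] {x : A}
    {n N : ℕ} (hnN : n ≤ N) (c : Fin n → R)
    (hx : x ^ N = ∑ j : Fin n, algebraMap R A (c j) * x ^ (j : ℕ)) : IsIntegral R x := by
  refine ⟨X ^ N - ∑ j : Fin n, C (c j) * X ^ (j : ℕ),
    monic_X_pow_sub ((degree_sum_fin_lt c).trans_le (by exact_mod_cast hnN)), ?_⟩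
  simp [eval₂_finsetSum, hx]

theorem MvPolynomial.finite_of_isIntegral_X {σ R : Type*} [Finite σ] [CommRing R]
    (S : Subalgebra R (MvPolynomial σ R)) (h : ∀ i, IsIntegral S (X i : MvPolynomial σ R)) :
    Module.Finite S (MvPolynomial σ R) := by
  have : Algebra.FiniteType S (MvPolynomial σ R) := .of_restrictScalars_finiteType R S _
  have : Algebra.IsIntegral S (MvPolynomial σ R) := ⟨fun p => by
    induction p using MvPolynomial.induction_on with
    | C a => exact isIntegral_algebraMap (x := (⟨C a, S.algebraMap_mem a⟩ : S))
    | add p q hp hq => exact hp.add hq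
    | mul_X p i hp => exact hp.mul (h i)⟩
  exact Algebra.IsIntegral.finite

theorem stmt_14_general {k : Type*} [Field k] {n : ℕ} (m : ℕ) :
    (Pm k n m = -(Polynomial.X ^ (n + m)) +
      ∑ j ∈ Finset.range n, Polynomial.C ((Pm k n m).coeff j) * Polynomial.X ^ j) ∧
    (∀ r : Fin n, Polynomial.eval (MvPolynomial.X r) (Pm k n m) = 0) ∧
    (∀ r : Fin n, (MvPolynomial.X r : MvPolynomial (Fin n) k) ^ (n + m) =
      ∑ j ∈ Finset.range n, (Pm k n m).coeff j * MvPolynomial.X r ^ j) ∧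
    Module.Finite
      (Algebra.adjoin k (Set.range fun j : Fin n => (Pm k n m).coeff (j : ℕ)))
      (MvPolynomial (Fin n) k) := by
  have hmem : Pm k n m + X ^ (n + m) ∈ degreeLT _ n := by
    have h := coeff_rootSeries_sub_X_pow_mem_degreeLT
      (MvPolynomial.X : Fin n → MvPolynomial (Fin n) k) Finset.univ m
    rw [Finset.card_univ, Fintype.card_fin] at h
    rw [Pm_eq_neg_coeff_rootSeries]
    convert neg_mem h using 1
    ring
  have hP := eq_neg_X_pow_add_sum_of_add_X_pow_mem_degreeLT (Nat.le_add_right n m) hmem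
  have hroot (r : Fin n) : (Pm k n m).eval (MvPolynomial.X r) = 0 := by
    rw [← IsRoot, ← dvd_iff_isRoot, Pm_eq_neg_coeff_rootSeries, dvd_neg]
    exact X_sub_C_dvd_coeff_rootSeries _ (Finset.mem_univ r) m
  have hrel (r : Fin n) : (MvPolynomial.X r : MvPolynomial (Fin n) k) ^ (n + m) =
      ∑ j ∈ Finset.range n, (Pm k n m).coeff j * MvPolynomial.X r ^ j := by
    have := hroot r
    rw [hP] at this
    simp only [eval_add, eval_neg, eval_pow, eval_X, eval_finsetSum, eval_mul, eval_C] at this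
    linear_combination -this
  refine ⟨hP, hroot, hrel, MvPolynomial.finite_of_isIntegral_X _ fun r => ?_⟩
  refine isIntegral_of_pow_eq_sum (Nat.le_add_right n m)
    (fun j => ⟨(Pm k n m).coeff j, Algebra.subset_adjoin ⟨j, rfl⟩⟩) ?_
  simpa [Finset.sum_range] using hrel r

/-- for every `m ≥ 1`:
`P_m(t) = -t^(n+m) + ∑_{j<n} η_m^j t^j`; moreover `P_m(λ_r) = 0` for each `r`, so each
`λ_r` satisfies the monic relation `λ_r^(n+m) = ∑_{j<n} η_m^j λ_r^j` over
`k[η_m^0, …, η_m^(n-1)]`; consequently `k[λ_1,…,λ_n]` is a finitely generated module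
over its subalgebra generated by `η_m^0, …, η_m^(n-1)`. -/
theorem stmt_14 {k : Type*} [Field k] {n : ℕ} (hn : 1 ≤ n) (m : ℕ) (hm : 1 ≤ m) :
    (Pm k n m = -(Polynomial.X ^ (n + m)) +
      ∑ j ∈ Finset.range n, Polynomial.C ((Pm k n m).coeff j) * Polynomial.X ^ j) ∧
    (∀ r : Fin n, Polynomial.eval (MvPolynomial.X r) (Pm k n m) = 0) ∧
    (∀ r : Fin n, (MvPolynomial.X r : MvPolynomial (Fin n) k) ^ (n + m) =
      ∑ j ∈ Finset.range n, (Pm k n m).coeff j * MvPolynomial.X r ^ j) ∧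
    Module.Finite
      (Algebra.adjoin k (Set.range fun j : Fin n => (Pm k n m).coeff (j : ℕ)))
      (MvPolynomial (Fin n) k) :=
  stmt_14_general m
end

section
/- Suppose k has characteristic p > 0 and deg c < p − 1. Then each of the elements h^p − h, e^p, and f^p of A commutes with each of h, e, and f; in particular these three elements are central in the subalgebra of A generated by h, e, f. -/
/-!
In characteristic `p` left and right multiplication by `x` are commuting operators, so
`ad (x ^ p) = (ad x) ^ p`. If `[h, x] = a x`, then `x q(h) = q(h - a) x`, hence
`(ad x)^n q(h) = (Δ^n q)(h) x^n` for the finite difference `Δ q = q(X - a) - q`, which lowers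
degrees. So `(ad e)^p` kills `h`, and `(ad e)^p f = (ad e)^(p-1) c(h) = 0` as `deg c < p - 1`;
likewise for `f`. Finally `(ad h)^p e = e = (ad h) e` and `(ad h)^p f = (-1)^p f = (ad h) f`.
-/

open Polynomial LieAlgebra

namespace Polynomial

variable {R : Type*} [CommRing R]

theorem degree_taylor_sub_lt (r : R) {q : R[X]} (hq : q ≠ 0) :
    (taylor r q - q).degree < q.degree :=
  (degree_sub_lt_left (degree_taylor q r) (mt (taylor_eq_zero r q).1 hq)
    (leadingCoeff_taylor r q)).trans_eq (degree_taylor q r)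

theorem taylor_sub_one_pow_apply_eq_zero (r : R) {n : ℕ} {q : R[X]} (hq : q.degree < n) :
    ((taylor r - 1) ^ n) q = 0 := by
  induction n generalizing q with
  | zero => simpa using hq
  | succ n ih =>
    rw [pow_succ, Module.End.mul_apply]
    apply ih
    rcases eq_or_ne q 0 with rfl | hq0
    · simp
    · calc _ < q.degree := degree_taylor_sub_lt r hq0
        _ ≤ n := Order.le_of_lt_succ (by exact_mod_cast hq)

end Polynomial

section CommRing

attribute [local instance] LieRing.ofAssociativeRing

variable {k A : Type*} [CommRing k] [Ring A] [Algebra k A]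

theorem aeval_add_algebraMap (h : A) (r : k) (q : k[X]) :
    aeval (h + algebraMap k A r) q = aeval h (taylor r q) := by
  rw [taylor_apply, aeval_comp]; simp

theorem mul_aeval_of_lie_eq_smul {h x : A} {a : k} (hx : ⁅h, x⁆ = a • x) (q : k[X]) :
    x * aeval h q = aeval h (taylor (-a) q) * x := by
  have hsemi : SemiconjBy x h (h + algebraMap k A (-a)) := by
    rw [Ring.lie_def] at hx
    rw [SemiconjBy, add_mul, map_neg, neg_mul, ← Algebra.smul_def, ← hx]
    abel
  rw [← aeval_add_algebraMap]
  induction q using Polynomial.induction_on' with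
  | add r s hr hs => simp only [map_add, mul_add, add_mul, hr, hs]
  | monomial n b =>
    rw [aeval_monomial, aeval_monomial, ← mul_assoc, ← Algebra.commutes, mul_assoc,
      (hsemi.pow_right n).eq, mul_assoc]

theorem ad_pow_aeval {h x : A} {a : k} (hx : ⁅h, x⁆ = a • x) (q : k[X]) (n : ℕ) :
    (ad k A x ^ n) (aeval h q) = aeval h (((taylor (-a) - 1) ^ n) q) * x ^ n := by
  induction n with
  | zero => simp
  | succ n ih =>
    rw [pow_succ', Module.End.mul_apply, ih, ad_apply, Ring.lie_def, ← mul_assoc,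
      mul_aeval_of_lie_eq_smul hx, pow_succ', Module.End.mul_apply, LinearMap.sub_apply,
      map_sub, sub_mul, mul_assoc, mul_assoc, ← pow_succ, ← pow_succ']
    simp

theorem ad_pow_aeval_eq_zero {h x : A} {a : k} (hx : ⁅h, x⁆ = a • x) {q : k[X]} {n : ℕ}
    (hq : q.degree < n) : (ad k A x ^ n) (aeval h q) = 0 := by
  rw [ad_pow_aeval hx, taylor_sub_one_pow_apply_eq_zero _ hq, map_zero, zero_mul]

theorem ad_pow_apply_of_lie_eq_smul {h x : A} {a : k} (hx : ⁅h, x⁆ = a • x) (n : ℕ) :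
    (ad k A h ^ n) x = a ^ n • x := by
  induction n with
  | zero => simp
  | succ n ih =>
    rw [pow_succ', Module.End.mul_apply, ih, map_smul, ad_apply, hx, smul_smul, pow_succ]

end CommRing

section Field

attribute [local instance] LieRing.ofAssociativeRing

variable {k A : Type*} [Field k] [Ring A] [Algebra k A]

theorem ad_pow_char (p : ℕ) [Fact p.Prime] [CharP k p] (x : A) :
    ad k A (x ^ p) = ad k A x ^ p := by
  -- `Module.End k A` has characteristic `p` only when `A` is nontrivial.
  nontriviality A
  have := charP_of_injective_algebraMap (algebraMap k (Module.End k A)).injective p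
  show LinearMap.mulLeft k (x ^ p) - LinearMap.mulRight k (x ^ p) =
    (LinearMap.mulLeft k x - LinearMap.mulRight k x) ^ p
  rw [sub_pow_char_of_commute p (LinearMap.commute_mulLeft_right x x), LinearMap.pow_mulLeft,
    LinearMap.pow_mulRight]

variable (k) in
theorem commute_pow_char_iff (p : ℕ) [Fact p.Prime] [CharP k p] {x y : A} :
    Commute (x ^ p) y ↔ (ad k A x ^ p) y = 0 := by
  rw [commute_iff_lie_eq, ← ad_pow_char p, ad_apply]

theorem commute_pow_char_of_lie_eq_smul (p : ℕ) [Fact p.Prime] [CharP k p] {h x : A} {a : k}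
    (hx : ⁅h, x⁆ = a • x) : Commute (x ^ p) h := by
  rw [commute_pow_char_iff k p, ← aeval_X (R := k) h]
  refine ad_pow_aeval_eq_zero hx ?_
  rw [degree_X]
  exact_mod_cast (Fact.out : p.Prime).one_lt

theorem commute_pow_char_of_lie_eq_aeval (p : ℕ) [Fact p.Prime] [CharP k p] {h x y : A} {a : k}
    {q : k[X]} (hx : ⁅h, x⁆ = a • x) (hxy : ⁅x, y⁆ = aeval h q) (hq : q.degree < (p - 1 : ℕ)) :
    Commute (x ^ p) y := by
  have hp : p = p - 1 + 1 := (Nat.sub_add_cancel (Fact.out : p.Prime).one_le).symm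
  rw [commute_pow_char_iff k p, hp, pow_succ, Module.End.mul_apply, ad_apply, hxy]
  exact ad_pow_aeval_eq_zero hx hq

theorem commute_pow_char_sub_self_of_lie_eq_smul (p : ℕ) [Fact p.Prime] [CharP k p] {h x : A}
    {a : k} (hx : ⁅h, x⁆ = a • x) (ha : a ^ p = a) : Commute (h ^ p - h) x := by
  rw [commute_iff_lie_eq, sub_lie, ← ad_apply (R := k), ← ad_apply (R := k), ad_pow_char,
    ad_pow_apply_of_lie_eq_smul hx, ad_apply, hx, ha, sub_self]

end Field

/-- Let `k` be a field of characteristic `p > 0`, `c ∈ k[X]` with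
`deg c < p - 1`, and `A` an associative unital `k`-algebra containing `h, e, f` with
`he - eh = e`, `hf - fh = -f`, `ef - fe = c(h)`.  Then `h^p - h`, `e^p` and `f^p`
commute with each of `h`, `e`, `f`. -/
theorem stmt_15 {k : Type*} [Field k] (p : ℕ) [CharP k p] (hp : 0 < p)
    (c : Polynomial k) (hdeg : c.degree < (p - 1 : ℕ))
    {A : Type*} [Ring A] [Algebra k A] (h e f : A)
    (rel1 : h * e - e * h = e) (rel2 : h * f - f * h = -f)
    (rel3 : e * f - f * e = Polynomial.aeval h c) :
    (Commute (h ^ p - h) h ∧ Commute (h ^ p - h) e ∧ Commute (h ^ p - h) f) ∧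
    (Commute (e ^ p) h ∧ Commute (e ^ p) e ∧ Commute (e ^ p) f) ∧
    (Commute (f ^ p) h ∧ Commute (f ^ p) e ∧ Commute (f ^ p) f) := by
  have : NeZero p := NeZero.of_pos hp
  have := CharP.char_is_prime_of_pos k p
  have he : ⁅h, e⁆ = (1 : k) • e := by rw [one_smul, Ring.lie_def, rel1]
  have hf : ⁅h, f⁆ = (-1 : k) • f := by rw [neg_one_smul, Ring.lie_def, rel2]
  have hef : ⁅e, f⁆ = aeval h c := by rw [Ring.lie_def, rel3]
  have hfe : ⁅f, e⁆ = aeval h (-c) := by rw [Ring.lie_def, map_neg, ← rel3, neg_sub]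
  exact ⟨⟨((Commute.refl h).pow_left p).sub_left (Commute.refl h),
      commute_pow_char_sub_self_of_lie_eq_smul p he (one_pow p),
      commute_pow_char_sub_self_of_lie_eq_smul p hf (neg_one_pow_char k p)⟩,
    ⟨commute_pow_char_of_lie_eq_smul p he, (Commute.refl e).pow_left p,
      commute_pow_char_of_lie_eq_aeval p he hef hdeg⟩,
    ⟨commute_pow_char_of_lie_eq_smul p hf,
      commute_pow_char_of_lie_eq_aeval p hf hfe (by rwa [degree_neg]),
      (Commute.refl f).pow_left p⟩⟩
end

section
/- Suppose z ∈ k[X] satisfies z(X+1) − z(X) = c(X). Then the Casimir element Δ = ef + z(h) of A commutes with each of h, e, and f; in particular Δ is central in the subalgebra of A generated by h, e, f. -/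
/-!
The relations say that `e` shifts `h` up by one and `f` shifts it down by one
(`h e = e (h + 1)`, `h f = f (h - 1)`), so moving a polynomial in `h` past `e` or `f` shifts its
argument. Hence `e f` commutes with `h`, while `z(h) e = e z(h + 1) = e (z(h) + c(h))`; the extra
`e c(h)` is exactly cancelled by `e f e = e (e f - c(h))`, and symmetrically for `f`.
-/

open Polynomial

section

variable {k A : Type*} [CommSemiring k] [Semiring A] [Algebra k A]

theorem aeval_mul_of_mul_eq_mul {a x b : A} (hx : a * x = x * b) (p : k[X]) :
    aeval a p * x = x * aeval b p := by
  have hpow (n : ℕ) : a ^ n * x = x * b ^ n := (SemiconjBy.pow_right hx.symm n).symm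
  induction p using Polynomial.induction_on' with
  | add p q hp hq => rw [map_add, map_add, add_mul, mul_add, hp, hq]
  | monomial n r =>
    rw [aeval_monomial, aeval_monomial, mul_assoc, hpow, ← mul_assoc, Algebra.commutes, mul_assoc]

theorem aeval_add_one_of_comp_eq_add {c z : k[X]} (hz : z.comp (X + 1) = z + c) (a : A) :
    aeval (a + 1) z = aeval a z + aeval a c := by
  simpa only [aeval_comp, map_add, aeval_X, map_one] using congrArg (aeval a) hz

end

section

variable {k A : Type*} [CommRing k] [Ring A] [Algebra k A] {c z : k[X]} {h e f : A}

theorem commute_mul_add_aeval_self (he : h * e = e * (h + 1)) (hf : h * f = f * (h - 1)) :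
    Commute (e * f + aeval h z) h := by
  have hef : h * (e * f) = e * f * h :=
    calc h * (e * f) = e * (h * f) + e * f := by rw [← mul_assoc, he]; noncomm_ring
      _ = e * f * h := by rw [hf]; noncomm_ring
  show _ * h = h * _
  rw [add_mul, mul_add, hef, aeval_mul_of_mul_eq_mul rfl]

theorem commute_mul_add_aeval_left (hz : z.comp (X + 1) = z + c) (he : h * e = e * (h + 1))
    (hfe : f * e = e * f - aeval h c) : Commute (e * f + aeval h z) e := by
  show _ * e = e * _
  calc (e * f + aeval h z) * e = e * (f * e) + aeval h z * e := by noncomm_ring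
    _ = e * (e * f - aeval h c) + e * (aeval h z + aeval h c) := by
        rw [hfe, aeval_mul_of_mul_eq_mul he, aeval_add_one_of_comp_eq_add hz]
    _ = e * (e * f + aeval h z) := by noncomm_ring

theorem commute_mul_add_aeval_right (hz : z.comp (X + 1) = z + c) (hf : h * f = f * (h - 1))
    (hfe : f * e = e * f - aeval h c) : Commute (e * f + aeval h z) f := by
  have hz' : aeval h z = aeval (h - 1) z + aeval (h - 1) c := by
    simpa only [sub_add_cancel] using aeval_add_one_of_comp_eq_add hz (h - 1)
  show _ * f = f * _
  calc (e * f + aeval h z) * f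
      = (e * f - aeval h c) * f + f * (aeval (h - 1) z + aeval (h - 1) c) := by
        rw [add_mul, sub_mul, aeval_mul_of_mul_eq_mul hf, aeval_mul_of_mul_eq_mul hf]
        noncomm_ring
    _ = f * (e * f + aeval h z) := by rw [← hfe, ← hz']; noncomm_ring

end

/-- Let `k` be a field, `c ∈ k[X]`, and `A` an associative unital
`k`-algebra containing `h, e, f` with `he - eh = e`, `hf - fh = -f`, `ef - fe = c(h)`.
If `z ∈ k[X]` satisfies `z(X+1) - z(X) = c(X)`, then the Casimir element
`Δ = ef + z(h)` commutes with each of `h`, `e` and `f`. -/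
theorem stmt_16 {k : Type*} [Field k] (c z : Polynomial k)
    (hz : z.comp (Polynomial.X + 1) - z = c)
    {A : Type*} [Ring A] [Algebra k A] (h e f : A)
    (rel1 : h * e - e * h = e) (rel2 : h * f - f * h = -f)
    (rel3 : e * f - f * e = Polynomial.aeval h c) :
    Commute (e * f + Polynomial.aeval h z) h ∧
    Commute (e * f + Polynomial.aeval h z) e ∧
    Commute (e * f + Polynomial.aeval h z) f := by
  have hz' : z.comp (X + 1) = z + c := eq_add_of_sub_eq' hz
  have he : h * e = e * (h + 1) := by rw [mul_add_one]; exact eq_add_of_sub_eq' rel1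
  have hf : h * f = f * (h - 1) := by
    rw [mul_sub_one, eq_add_of_sub_eq' rel2, sub_eq_add_neg]
  have hfe : f * e = e * f - aeval h c := eq_sub_of_add_eq (eq_add_of_sub_eq' rel3).symm
  exact ⟨commute_mul_add_aeval_self he hf, commute_mul_add_aeval_left hz' he hfe,
    commute_mul_add_aeval_right hz' hf hfe⟩
end

section
/- Suppose k has characteristic p > 0. Let M be a left A-module, let v ∈ M be a nonzero vector with h·v = λ·v for some λ ∈ k, and suppose that f^p acts on M as multiplication by a nonzero scalar. Then the p vectors v, f·v, f²·v, …, f^{p−1}·v are linearly independent over k; in particular dim_k M ≥ p. -/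
/-- Let `k` be a field of characteristic `p > 0`, `c ∈ k[X]`, and `A` an
associative unital `k`-algebra containing `h, e, f` with `he - eh = e`, `hf - fh = -f`,
`ef - fe = c(h)`.  Let `M` be a left `A`-module, `v ∈ M` a nonzero vector with
`h • v = λ • v` for some `λ ∈ k`, and suppose `f^p` acts on `M` as multiplication by a
nonzero scalar.  Then `v, f•v, …, f^(p-1)•v` are linearly independent over `k`;
in particular `dim_k M ≥ p`. -/
theorem stmt_17 {k : Type*} [Field k] (p : ℕ) [CharP k p] (hp : 0 < p)
    (c : Polynomial k)
    {A : Type*} [Ring A] [Algebra k A] (h e f : A)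
    (rel1 : h * e - e * h = e) (rel2 : h * f - f * h = -f)
    (rel3 : e * f - f * e = Polynomial.aeval h c)
    {M : Type*} [AddCommGroup M] [Module A M] [Module k M] [IsScalarTower k A M]
    (v : M) (hv : v ≠ 0) (lam : k) (hweight : h • v = lam • v)
    (mu : k) (hmu : mu ≠ 0) (hfp : ∀ m : M, (f ^ p) • m = mu • m) :
    LinearIndependent k (fun i : Fin p => (f ^ (i : ℕ)) • v) ∧
    (p : Cardinal) ≤ Module.rank k M := by
  have comm : ∀ (a : k) (x : A) (m : M), x • a • m = a • x • m := fun a x m => by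
    rw [← algebraMap_smul A a m, ← mul_smul, ← Algebra.commutes a x, mul_smul, algebraMap_smul]
  -- the k-linear endomorphism given by action of h
  let φ : Module.End k M :=
    { toFun := fun m => h • m
      map_add' := fun m n => smul_add h m n
      map_smul' := fun a m => by simp only [RingHom.id_apply]; exact comm a h m }
  have hf' : h * f = f * h - f := by
    rw [sub_eq_iff_eq_add.mp rel2]; abel
  -- eigenvector computation
  have key : ∀ n : ℕ, h • ((f ^ n) • v) = (lam - n) • ((f ^ n) • v) := by
    intro n
    induction n with
    | zero => simpa using hweight
    | succ n ih =>
      have step : h • ((f ^ (n+1)) • v) = f • (h • ((f ^ n) • v)) - f • ((f ^ n) • v) := by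
        rw [pow_succ', mul_smul, ← mul_smul, hf', sub_smul, mul_smul]
      rw [step, ih, comm, pow_succ', mul_smul]
      rw [show lam - ((n+1 : ℕ) : k) = (lam - n) - 1 by push_cast; ring]
      simp only [sub_smul, one_smul]
  -- nonvanishing
  have nz : ∀ n : ℕ, n ≤ p → (f ^ n) • v ≠ 0 := by
    intro n hn h0
    have : (f ^ p) • v = 0 := by
      rw [← Nat.sub_add_cancel hn, pow_add, mul_smul, h0, smul_zero]
    rw [hfp] at this
    exact hv ((smul_eq_zero.mp this).resolve_left hmu)
  have li : LinearIndependent k (fun i : Fin p => (f ^ (i : ℕ)) • v) := by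
    apply φ.eigenvectors_linearIndependent' (fun i : Fin p => lam - i)
    · intro i j hij
      have hij' : lam - (i : k) = lam - (j : k) := hij
      have : ((i : ℕ) : k) = ((j : ℕ) : k) := sub_right_injective hij'
      exact Fin.ext ((CharP.natCast_injOn_Iio k p) i.2 j.2 this)
    · intro i
      exact ⟨Module.End.mem_eigenspace_iff.mpr (key i), nz i (le_of_lt i.2)⟩
  refine ⟨li, ?_⟩
  simpa using li.cardinal_lift_le_rank
end
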